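/- arXiv:2006.04086 — 8 statements merged into one kernel-verified Lean document; each statement's English description precedes it below -/
import Mathlib

section
/- Suppose M is an irredundant mixed orthogonal array of strength k with minimum Hamming distance MD(M) = b ≥ k+1. If any c ≤ b−(k+1) columns are removed from M, the resulting array is still an irredundant mixed orthogonal array of strength k. -/
/-!
Deleting columns cannot destroy strength: any `k` surviving columns are `k` columns of `M`.
Irredundance of strength `k` only needs every two distinct rows to differ in more than `k`
columns, and deleting `c` columns lowers a Hamming distance by at most `c`; so the distance
`b ≥ c + k + 1` of `M` leaves more than `k` differences after the deletion.
-/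

open Finset

/-- `M` is a mixed orthogonal array of strength `k`. -/
def IsMOA {r : ℕ} {ι : Type} [Fintype ι] [DecidableEq ι]
    (d : ι → ℕ) (k : ℕ) (M : Fin r → ∀ j, Fin (d j)) : Prop :=
  ∀ (cols : Fin k ↪ ι) (t t' : ∀ s, Fin (d (cols s))),
    (univ.filter fun x => ∀ s, M x (cols s) = t s).card =
    (univ.filter fun x => ∀ s, M x (cols s) = t' s).card

/-- `M` is irredundant. -/
def IsIrredundant {r : ℕ} {ι : Type} [Fintype ι] [DecidableEq ι]
    (d : ι → ℕ) (k : ℕ) (M : Fin r → ∀ j, Fin (d j)) : Prop :=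
  ∀ S : Finset ι, S.card = k → ∀ x y : Fin r, x ≠ y → ∃ j ∉ S, M x j ≠ M y j

theorem IsMOA.comp_embedding {r k : ℕ} {ι κ : Type} [Fintype ι] [DecidableEq ι] [Fintype κ]
    [DecidableEq κ] {d : ι → ℕ} {M : Fin r → ∀ j, Fin (d j)} (hM : IsMOA d k M) (e : κ ↪ ι) :
    IsMOA (fun j => d (e j)) k (fun x j => M x (e j)) :=
  fun cols t t' => hM (cols.trans e) t t'

theorem exists_notMem_ne_of_card_lt_hammingDist {ι : Type*} {β : ι → Type*} [Fintype ι]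
    [∀ i, DecidableEq (β i)] {f g : ∀ i, β i} {S : Finset ι} (h : #S < hammingDist f g) :
    ∃ j ∉ S, f j ≠ g j := by
  by_contra! hfg
  have hsub : ({i | f i ≠ g i} : Finset ι) ⊆ S := fun i hi => by
    by_contra hiS
    exact (mem_filter.mp hi).2 (hfg i hiS)
  exact (card_le_card hsub).not_gt h

theorem isIrredundant_of_lt_hammingDist {r k : ℕ} {ι : Type} [Fintype ι] [DecidableEq ι]
    {d : ι → ℕ} {M : Fin r → ∀ j, Fin (d j)}
    (h : ∀ x y, x ≠ y → k < hammingDist (M x) (M y)) : IsIrredundant d k M :=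
  fun _ hS x y hxy => exists_notMem_ne_of_card_lt_hammingDist (hS ▸ h x y hxy)

theorem hammingDist_le_hammingDist_subtype_add_card {ι : Type*} {β : ι → Type*} [Fintype ι]
    [DecidableEq ι] [∀ i, DecidableEq (β i)] (T : Finset ι) (f g : ∀ i, β i) :
    hammingDist f g ≤ hammingDist (fun j : {j // j ∉ T} => f j) (fun j => g j) + #T := by
  set D : Finset {j // j ∉ T} := {j | f j ≠ g j}
  have hsub : ({i | f i ≠ g i} : Finset ι) ⊆ T ∪ D.map (Function.Embedding.subtype _) := by
    intro i hi
    by_cases hiT : i ∈ T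
    · exact mem_union_left _ hiT
    · refine mem_union_right _ (mem_map.mpr ⟨⟨i, hiT⟩, ?_, rfl⟩)
      exact mem_filter.mpr ⟨mem_univ _, (mem_filter.mp hi).2⟩
  calc hammingDist f g ≤ #(T ∪ D.map (Function.Embedding.subtype _)) := card_le_card hsub
    _ ≤ #T + #D := (card_union_le _ _).trans_eq (by rw [card_map])
    _ = #D + #T := add_comm _ _

theorem irmoa_delete_columns_general {r N k b c : ℕ} (d : Fin N → ℕ)
    (M : Fin r → ∀ j, Fin (d j))
    (hM : IsMOA d k M)
    (hb : ∀ x y : Fin r, x ≠ y → b ≤ hammingDist (M x) (M y))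
    (hc : c + (k + 1) ≤ b)
    (T : Finset (Fin N)) (hT : T.card = c) :
    IsMOA (fun j : {j : Fin N // j ∉ T} => d j.1) k (fun x j => M x j.1) ∧
    IsIrredundant (fun j : {j : Fin N // j ∉ T} => d j.1) k (fun x j => M x j.1) := by
  refine ⟨hM.comp_embedding (Function.Embedding.subtype _),
    isIrredundant_of_lt_hammingDist fun x y hxy => ?_⟩
  have hdel := hammingDist_le_hammingDist_subtype_add_card T (M x) (M y)
  have hdist := hb x y hxy
  omega

/-- Removing any `c ≤ b - (k+1)` columns from an irredundant MOA of strength `k`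
with minimum Hamming distance `b ≥ k+1` yields again an irredundant MOA of
strength `k`. -/
theorem irmoa_delete_columns {r N k b c : ℕ} (d : Fin N → ℕ)
    (M : Fin r → ∀ j, Fin (d j))
    (hM : IsMOA d k M) (hirr : IsIrredundant d k M)
    (hb : ∀ x y : Fin r, x ≠ y → b ≤ hammingDist (M x) (M y))
    (hbk : k + 1 ≤ b) (hc : c + (k + 1) ≤ b)
    (T : Finset (Fin N)) (hT : T.card = c) :
    IsMOA (fun j : {j : Fin N // j ∉ T} => d j.1) k (fun x j => M x j.1) ∧
    IsIrredundant (fun j : {j : Fin N // j ∉ T} => d j.1) k (fun x j => M x j.1) :=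
  irmoa_delete_columns_general d M hM hb hc T hT
end

section
/- Let A_1 be an r×N array over Z_d whose rows are pairwise at Hamming distance at least (in fact exactly minimum) b, and let A_2 be a generalized Hadamard matrix D(λd, λd, d) over Z_d, i.e., a λd×λd matrix such that the difference of every pair of distinct columns contains each element of Z_d exactly λ times. Form A_1' = (m^T, A_1 ⊕ A_2), where A_1 ⊕ A_2 is the rλd × Nλd array whose block rows are (a_{i,j} + A_2) and where m is the column of length rλd whose entries cycle through 0,1,...,λd−1. Then the minimum Hamming distance of A_1' equals min{λ(d−1)N + 1, λd·b}. -/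
/-!
Fix two rows `(i, t)` and `(i', t')` of `A₁'`. If `t = t'` the cycling column agrees, and the
block of column `j` is `A₁ i j + H t` against `A₁ i' j + H t`, which differ everywhere or
nowhere; so the distance is `λd · d(A₁ i, A₁ i')`. If `t ≠ t'` the cycling column differs, and
`a + H t s = a' + H t' s` means `H t s - H t' s = a' - a`, which by the Hadamard property holds
for exactly `λ` of the `λd` values of `s`; so the distance is `λ(d-1)N + 1`. Both values are
attained: the first by two rows of `A₁` at distance `b`, the second by any `t ≠ t'`; these exist
when `λ(d-1)N + 1 ≤ λdb`, since `d = 1` would force `b = 0`.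
-/

open Finset

/-- Columns of the array `A₁' = (mᵀ, A₁ ⊕ A₂)`: one extra first column plus an
`N × L` grid of columns. -/
abbrev GHCol (N L : ℕ) := Unit ⊕ (Fin N × Fin L)

/-- Alphabets: the first column takes values in `ZMod L` (`L = λd`), the others in `ZMod d`. -/
def GHAlph (N L d : ℕ) : GHCol N L → Type :=
  Sum.elim (fun _ => ZMod L) (fun _ => ZMod d)

instance (N L d : ℕ) : ∀ i : GHCol N L, DecidableEq (GHAlph N L d i)
  | Sum.inl _ => inferInstanceAs (DecidableEq (ZMod L))
  | Sum.inr _ => inferInstanceAs (DecidableEq (ZMod d))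

/-- The row of `A₁' = (mᵀ, A₁ ⊕ A₂)` indexed by `(i, t)`: the first entry is the
cycling symbol `t`, and entry `(j, s)` equals `A₁ i j + H t s`. -/
def ghRow {r N : ℕ} (L d : ℕ) (A1 : Fin r → Fin N → ZMod d)
    (H : Fin L → Fin L → ZMod d) (p : Fin r × Fin L) :
    ∀ i : GHCol N L, GHAlph N L d i
  | Sum.inl _ => ((p.2 : ℕ) : ZMod L)
  | Sum.inr js => A1 p.1 js.1 + H p.2 js.2

variable {ι κ G : Type*} [Fintype κ] [AddCommGroup G] [DecidableEq G]

theorem hammingDist_const_add (a a' : G) (f g : κ → G) :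
    hammingDist (fun s => a + f s) (fun s => a' + g s) =
      Fintype.card κ - #{s | f s - g s = a' - a} := by
  have hsplit := card_filter_add_card_filter_not (s := univ) fun s => f s - g s = a' - a
  rw [card_univ] at hsplit
  rw [hammingDist, ← hsplit, add_tsub_cancel_left]
  congr 1
  exact filter_congr fun s _ => by rw [sub_eq_sub_iff_add_eq_add, add_comm (f s)]

theorem hammingDist_const_add_const_add (a a' : G) (f : κ → G) :
    hammingDist (fun s => a + f s) (fun s => a' + f s) = if a = a' then 0 else Fintype.card κ := by
  by_cases h : a = a' <;> simp [hammingDist, h]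

def IsGenHadamard (lam : ℕ) (H : ι → κ → G) : Prop :=
  ∀ i j, i ≠ j → ∀ a : G, #{t | H i t - H j t = a} = lam

theorem IsGenHadamard.hammingDist_const_add {lam : ℕ} {H : ι → κ → G}
    (hH : IsGenHadamard lam H) {t t' : ι} (ht : t ≠ t') (a a' : G) :
    hammingDist (fun s => a + H t s) (fun s => a' + H t' s) = Fintype.card κ - lam := by
  rw [_root_.hammingDist_const_add, hH t t' ht]

theorem Fin.natCast_val_eq_natCast_val_iff {L : ℕ} {t t' : Fin L} :
    ((t : ℕ) : ZMod L) = ((t' : ℕ) : ZMod L) ↔ t = t' := by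
  refine ⟨fun h => Fin.ext ?_, fun h => h ▸ rfl⟩
  simpa only [ZMod.val_cast_of_lt t.2, ZMod.val_cast_of_lt t'.2] using congrArg ZMod.val h

section GHRow

variable {r N d : ℕ} (A1 : Fin r → Fin N → ZMod d)

theorem hammingDist_ghRow {L : ℕ} (H : Fin L → Fin L → ZMod d) (i i' : Fin r) (t t' : Fin L) :
    hammingDist (ghRow L d A1 H (i, t)) (ghRow L d A1 H (i', t')) =
      (if t = t' then 0 else 1) +
        ∑ j, hammingDist (fun s => A1 i j + H t s) (fun s => A1 i' j + H t' s) := by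
  have hfirst : ghRow L d A1 H (i, t) (.inl ()) = ghRow L d A1 H (i', t') (.inl ()) ↔ t = t' :=
    Fin.natCast_val_eq_natCast_val_iff
  rw [hammingDist, card_filter, Fintype.sum_sum_type, Fintype.sum_prod_type]
  simp only [Fintype.univ_unit, sum_singleton, ne_eq, hfirst, ite_not, hammingDist, card_filter]
  rfl

theorem hammingDist_ghRow_same_symbol {L : ℕ} (H : Fin L → Fin L → ZMod d) (i i' : Fin r)
    (t : Fin L) :
    hammingDist (ghRow L d A1 H (i, t)) (ghRow L d A1 H (i', t)) =
      L * hammingDist (A1 i) (A1 i') := by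
  simp only [hammingDist_ghRow, hammingDist_const_add_const_add, if_true, zero_add,
    Fintype.card_fin]
  simp only [hammingDist, card_filter, mul_sum, ne_eq, ite_not, mul_ite, mul_zero, mul_one]

theorem hammingDist_ghRow_of_ne {lam : ℕ} {H : Fin (lam * d) → Fin (lam * d) → ZMod d}
    (hH : IsGenHadamard lam H) (i i' : Fin r) {t t' : Fin (lam * d)} (ht : t ≠ t') :
    hammingDist (ghRow (lam * d) d A1 H (i, t)) (ghRow (lam * d) d A1 H (i', t')) =
      lam * (d - 1) * N + 1 := by
  simp only [hammingDist_ghRow, if_neg ht, hH.hammingDist_const_add ht, sum_const, card_univ,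
    Fintype.card_fin, smul_eq_mul, ← Nat.mul_sub_one]
  ring

end GHRow

/-- If `A₁` has minimum Hamming distance `b` and `H` is a generalized Hadamard
matrix `D(λd, λd, d)` over `Z_d`, then `A₁' = (mᵀ, A₁ ⊕ A₂)` has minimum Hamming
distance exactly `min (λ(d-1)N + 1) (λd·b)`. -/
theorem ghm_construction_minDist (r N d lam b : ℕ) (hd : 0 < d) (hlam : 0 < lam)
    (A1 : Fin r → Fin N → ZMod d)
    (H : Fin (lam * d) → Fin (lam * d) → ZMod d)
    (hA1lb : ∀ x y : Fin r, x ≠ y → b ≤ hammingDist (A1 x) (A1 y))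
    (hA1eq : ∃ x y : Fin r, x ≠ y ∧ hammingDist (A1 x) (A1 y) = b)
    (hH : ∀ i j : Fin (lam * d), i ≠ j → ∀ a : ZMod d,
      (univ.filter fun t => H i t - H j t = a).card = lam) :
    (∀ p q : Fin r × Fin (lam * d), p ≠ q →
      min (lam * (d - 1) * N + 1) (lam * d * b) ≤
        hammingDist (ghRow (lam * d) d A1 H p) (ghRow (lam * d) d A1 H q)) ∧
    (∃ p q : Fin r × Fin (lam * d), p ≠ q ∧
      hammingDist (ghRow (lam * d) d A1 H p) (ghRow (lam * d) d A1 H q) =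
        min (lam * (d - 1) * N + 1) (lam * d * b)) := by
  constructor
  · rintro ⟨i, t⟩ ⟨i', t'⟩ hpq
    by_cases ht : t = t'
    · subst ht
      have hi : i ≠ i' := fun h => hpq (h ▸ rfl)
      rw [hammingDist_ghRow_same_symbol]
      exact (min_le_right _ _).trans (Nat.mul_le_mul_left _ (hA1lb i i' hi))
    · rw [hammingDist_ghRow_of_ne A1 hH i i' ht]
      exact min_le_left _ _
  · obtain ⟨x, y, hxy, hb⟩ := hA1eq
    rcases le_total (lam * d * b) (lam * (d - 1) * N + 1) with hle | hle
    · have hL : 0 < lam * d := Nat.mul_pos hlam hd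
      refine ⟨(x, ⟨0, hL⟩), (y, ⟨0, hL⟩), by simp [hxy], ?_⟩
      rw [hammingDist_ghRow_same_symbol, hb, min_eq_right hle]
    · have hd1 : d ≠ 1 := by
        rintro rfl
        have hb0 : b = 0 := hb ▸ hammingDist_eq_zero.mpr (Subsingleton.elim _ _)
        simp [hb0] at hle
      have hL : 1 < lam * d := (by omega : 1 < d).trans_le (Nat.le_mul_of_pos_left d hlam)
      refine ⟨(x, ⟨0, by omega⟩), (x, ⟨1, hL⟩), by simp, ?_⟩
      rw [hammingDist_ghRow_of_ne A1 hH _ _ (by simp), min_eq_left hle]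
end

section
/- Let M = (m_{i,j}) be an irredundant mixed orthogonal array IrMOA(r, d_1^{n_1}...d_ℓ^{n_ℓ}, k) with N columns. Then the pure state |ψ⟩ = (1/√r) Σ_{i=1}^r |m_{i,1}⟩⊗...⊗|m_{i,N}⟩ in (C^{d_1})^{⊗n_1} ⊗ ... ⊗ (C^{d_ℓ})^{⊗n_ℓ} is k-uniform: for every subset S of k of the N parties, the reduced density matrix tr_{S^c}|ψ⟩⟨ψ| equals the maximally mixed state (1/D_S) I, where D_S is the product of the local dimensions of the parties in S. -/
open Finset

/-- Entry `(a|_S, b|_S)` of the reduced density matrix of the pure state with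
computational-basis coefficients `ψ`, obtained by tracing out the parties
outside `S`. -/
noncomputable def reducedEntry {ι : Type} [Fintype ι] [DecidableEq ι]
    (d : ι → ℕ) (ψ : (∀ i, Fin (d i)) → ℂ) (S : Finset ι)
    (a b : ∀ i, Fin (d i)) : ℂ :=
  ∑ c : ∀ i : {i // i ∉ S}, Fin (d i.1),
    ψ (fun i => if h : i ∈ S then a i else c ⟨i, h⟩) *
      (starRingEnd ℂ) (ψ (fun i => if h : i ∈ S then b i else c ⟨i, h⟩))

/-- `ψ` is `k`-uniform: every reduction to `k` parties is maximally mixed. -/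
def IsKUniform {ι : Type} [Fintype ι] [DecidableEq ι]
    (d : ι → ℕ) (k : ℕ) (ψ : (∀ i, Fin (d i)) → ℂ) : Prop :=
  ∀ S : Finset ι, S.card = k → ∀ a b : ∀ i, Fin (d i),
    reducedEntry d ψ S a b =
      if ∀ i ∈ S, a i = b i then 1 / (∏ i ∈ S, (d i : ℂ)) else 0

/-! Irredundancy says that two distinct rows of `M` already differ outside any `k`-set `S`,
so in the entry `∑_c ψ(a_S c) ψ(b_S c)*` of the reduced state only pairs of equal rows
survive: the entry is `[a = b on S] · #{rows agreeing with a on S} / r`. Strength `k` makes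
all `∏_{j ∈ S} d_j` patterns on `S` equally frequent, so that count is `r / ∏_{j ∈ S} d_j`. -/

lemma card_fiber_mul_card_eq_card {α β : Type*} [Fintype α] [Fintype β] [DecidableEq β]
    (f : α → β) (hf : ∀ b b', #{x | f x = b} = #{x | f x = b'}) (b : β) :
    #{x | f x = b} * Fintype.card β = Fintype.card α :=
  calc #{x | f x = b} * Fintype.card β = ∑ b' : β, #{x | f x = b'} := by
        simp [hf _ b, mul_comm]
    _ = Fintype.card α := (card_eq_sum_card_fiberwise (by simp)).symm

lemma card_filter_agree_both {α ι : Type*} [Fintype α] {β : ι → Type*} (S : Finset ι)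
    (m : α → ∀ j, β j) (a b : ∀ j, β j) [DecidablePred fun x => ∀ j ∈ S, m x j = a j]
    [DecidablePred fun x => (∀ j ∈ S, m x j = a j) ∧ ∀ j ∈ S, m x j = b j]
    [Decidable (∀ j ∈ S, a j = b j)] :
    #{x | (∀ j ∈ S, m x j = a j) ∧ ∀ j ∈ S, m x j = b j} =
      if ∀ j ∈ S, a j = b j then #{x | ∀ j ∈ S, m x j = a j} else 0 := by
  split_ifs with hab
  · exact congrArg card <| filter_congr fun x _ =>
      and_iff_left_of_imp fun h j hj => (h j hj).trans (hab j hj)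
  · exact card_eq_zero.2 <| filter_false_of_mem fun x _ h =>
      hab fun j hj => (h.1 j hj).symm.trans (h.2 j hj)

section

variable {ι : Type} [DecidableEq ι]

def glue {β : ι → Type*} (S : Finset ι) (a : ∀ j, β j) (c : ∀ j : {j // j ∉ S}, β j) :
    ∀ j, β j :=
  fun j => if h : j ∈ S then a j else c ⟨j, h⟩

lemma eq_glue_iff {β : ι → Type*} {S : Finset ι} {v a : ∀ j, β j}
    {c : ∀ j : {j // j ∉ S}, β j} :
    v = glue S a c ↔ (∀ j ∈ S, v j = a j) ∧ ∀ j : {j // j ∉ S}, v j = c j := by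
  refine ⟨fun h => ⟨fun j hj => by simp [h, glue, hj], fun j => by simp [h, glue, j.2]⟩,
    fun ⟨hS, hSc⟩ => funext fun j => ?_⟩
  by_cases hj : j ∈ S
  · simp [glue, hj, hS j hj]
  · simp [glue, hj, hSc ⟨j, hj⟩]

variable [Fintype ι] {d : ι → ℕ}

lemma reducedEntry_natCast_div_sqrt (f : (∀ j, Fin (d j)) → ℕ) (n : ℕ) (S : Finset ι)
    (a b : ∀ j, Fin (d j)) :
    reducedEntry d (fun x => (f x : ℂ) / Real.sqrt n) S a b =
      ((∑ c, f (glue S a c) * f (glue S b c) : ℕ) : ℂ) / n := by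
  have hsqrt : ((Real.sqrt n : ℝ) : ℂ) * (Real.sqrt n : ℝ) = n := by
    rw [← Complex.ofReal_mul, Real.mul_self_sqrt n.cast_nonneg, Complex.ofReal_natCast]
  rw [reducedEntry, Nat.cast_sum, sum_div]
  refine sum_congr rfl fun c _ => ?_
  rw [map_div₀, map_natCast, Complex.conj_ofReal, div_mul_div_comm, hsqrt, Nat.cast_mul]
  rfl

variable {r k : ℕ} {M : Fin r → ∀ j, Fin (d j)}

theorem IsMOA.card_filter_mul_prod_eq (hM : IsMOA d k M) {S : Finset ι} (hS : #S = k)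
    (a : ∀ j, Fin (d j)) :
    #{x | ∀ j ∈ S, M x j = a j} * ∏ j ∈ S, d j = r := by
  set e : S ≃ Fin k := S.equivFinOfCardEq hS
  set cols : Fin k ↪ ι := e.symm.toEmbedding.trans (Function.Embedding.subtype _)
  have hagree (x : Fin r) (t : ∀ j, Fin (d j)) :
      (fun s => M x (cols s)) = (fun s => t (cols s)) ↔ ∀ j ∈ S, M x j = t j := by
    refine funext_iff.trans ⟨fun h j hj => ?_, fun h s => h _ (e.symm s).2⟩
    obtain ⟨s, rfl⟩ : ∃ s, cols s = j := ⟨e ⟨j, hj⟩, by simp [cols]⟩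
    exact h s
  have hprod : ∏ s, d (cols s) = ∏ j ∈ S, d j := by
    rw [← prod_coe_sort S d]
    exact e.symm.prod_comp (fun j : S => d j)
  have hfibers := card_fiber_mul_card_eq_card (fun x s => M x (cols s))
    (fun t t' => by simpa only [funext_iff] using hM cols t t') (fun s => a (cols s))
  simpa only [hagree, Fintype.card_fin, Fintype.card_pi, hprod] using hfibers

lemma sum_card_mul_card_eq_card_pairs (S : Finset ι) (a b : ∀ j, Fin (d j)) :
    ∑ c, #{x | M x = glue S a c} * #{y | M y = glue S b c} =
      #{p : Fin r × Fin r | (∀ j ∈ S, M p.1 j = a j) ∧ (∀ j ∈ S, M p.2 j = b j) ∧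
        ∀ j ∉ S, M p.1 j = M p.2 j} := by
  rw [card_eq_sum_card_fiberwise (f := fun p (j : {j // j ∉ S}) => M p.1 j) (t := univ)
    (by simp)]
  refine sum_congr rfl fun c _ => ?_
  rw [← card_product]
  congr 1
  ext ⟨x, y⟩
  simp only [mem_filter, mem_univ, true_and, mem_product, eq_glue_iff]
  constructor
  · rintro ⟨⟨ha, hx⟩, hb, hy⟩
    exact ⟨⟨ha, hb, fun j hj => (hx ⟨j, hj⟩).trans (hy ⟨j, hj⟩).symm⟩, funext hx⟩
  · rintro ⟨⟨ha, hb, hxy⟩, rfl⟩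
    exact ⟨⟨ha, fun _ => rfl⟩, hb, fun j => (hxy j j.2).symm⟩

theorem IsIrredundant.eq_of_forall_notMem_eq (hirr : IsIrredundant d k M) {S : Finset ι}
    (hS : #S = k) {x y : Fin r} (h : ∀ j ∉ S, M x j = M y j) : x = y := by
  by_contra hxy
  obtain ⟨j, hj, hne⟩ := hirr S hS x y hxy
  exact hne (h j hj)

theorem IsIrredundant.sum_card_mul_card_glue (hirr : IsIrredundant d k M) {S : Finset ι}
    (hS : #S = k) (a b : ∀ j, Fin (d j)) :
    ∑ c, #{x | M x = glue S a c} * #{y | M y = glue S b c} =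
      if ∀ j ∈ S, a j = b j then #{x | ∀ j ∈ S, M x j = a j} else 0 := by
  rw [sum_card_mul_card_eq_card_pairs, ← card_filter_agree_both]
  refine (card_nbij' (fun x => (x, x)) Prod.fst ?_ ?_ ?_ ?_).symm
  · intro x hx
    simpa using hx
  · rintro ⟨x, y⟩ h
    simp only [coe_filter, mem_univ, true_and, Set.mem_ofPred_eq] at h ⊢
    obtain rfl := hirr.eq_of_forall_notMem_eq hS h.2.2
    exact ⟨h.1, h.2.1⟩
  · exact fun _ _ => rfl
  · rintro ⟨x, y⟩ h
    simp only [coe_filter, mem_univ, true_and, Set.mem_ofPred_eq] at h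
    obtain rfl := hirr.eq_of_forall_notMem_eq hS h.2.2
    rfl

theorem IsMOA.card_filter_div_eq (hM : IsMOA d k M) {S : Finset ι} (hS : #S = k)
    (a : ∀ j, Fin (d j)) (hr : r ≠ 0) :
    (#{x | ∀ j ∈ S, M x j = a j} : ℂ) / r = 1 / ∏ j ∈ S, (d j : ℂ) := by
  have hcount := hM.card_filter_mul_prod_eq hS a
  have hfiber : (#{x | ∀ j ∈ S, M x j = a j} : ℂ) ≠ 0 := by
    exact_mod_cast fun h => hr (by rw [← hcount, h, zero_mul])
  have hr' : (r : ℂ) = _ := congrArg Nat.cast hcount.symm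
  rw [hr', Nat.cast_mul, Nat.cast_prod, div_mul_cancel_left₀ hfiber, one_div]

end

/-- An irredundant mixed orthogonal array of strength `k` yields the `k`-uniform
state `|ψ⟩ = (1/√r) ∑ᵢ |mᵢ₁ … mᵢ_N⟩`. -/
theorem irmoa_gives_kUniform {r N k : ℕ} (hr : 0 < r) (d : Fin N → ℕ)
    (M : Fin r → ∀ j, Fin (d j))
    (hM : IsMOA d k M) (hirr : IsIrredundant d k M) :
    IsKUniform d k
      (fun x => ((univ.filter fun i => M i = x).card : ℂ) / Real.sqrt r) := by
  intro S hS a b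
  rw [reducedEntry_natCast_div_sqrt, hirr.sum_card_mul_card_glue hS]
  split_ifs
  · exact hM.card_filter_div_eq hS a hr.ne'
  · rw [Nat.cast_zero, zero_div]
end

section
/- If there exists a k-uniform state in C^{d_1}⊗C^{d_2}⊗C^{d_3}⊗...⊗C^{d_N}, then there exists a (k−1)-uniform state in C^{d_1 d_2}⊗C^{d_3}⊗...⊗C^{d_N}; specifically, the same state viewed under the identification C^{d_1}⊗C^{d_2} ≅ C^{d_1 d_2} of the first two factors is (k−1)-uniform on the resulting N−1 parties. -/
open Finset

/-- Dimensions of the original `N`-party system: two distinguished parties of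
dimensions `d1`, `d2`, and `n` further parties of dimensions `e j`. -/
def dimsSplit {n : ℕ} (d1 d2 : ℕ) (e : Fin n → ℕ) : Fin 2 ⊕ Fin n → ℕ :=
  Sum.elim (fun b => if b = 0 then d1 else d2) e

/-- Dimensions after merging the first two parties into one party `C^{d1·d2}`. -/
def dimsMerged {n : ℕ} (d1 d2 : ℕ) (e : Fin n → ℕ) : Option (Fin n) → ℕ :=
  fun o => o.elim (d1 * d2) e

/-!
Merging the first two parties is a reindexing of the configuration space under which the
reduced state of the merged system on a set `S` of parties is the reduced state of the original
system on the preimage of `S`. That preimage has `|S| + 1` parties when `S` contains the merged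
party, and `k`-uniformity applies to it directly. Otherwise it has `|S|` parties; adding one of
the two merged parties gives `k` parties, and tracing a party out of a maximally mixed reduction
leaves it maximally mixed, as long as that party has positive dimension, which normalization
guarantees.
-/

section ReducedEntry

variable {ι : Type} [Fintype ι] [DecidableEq ι] {d : ι → ℕ}

theorem reducedEntry_eq_sum_filter (ψ : (∀ i, Fin (d i)) → ℂ) (S : Finset ι)
    (a b : ∀ i, Fin (d i)) :
    reducedEntry d ψ S a b =
      ∑ x ∈ univ.filter (fun x => ∀ i ∈ S, x i = a i),
        ψ x * starRingEnd ℂ (ψ (S.piecewise b x)) := by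
  refine sum_nbij' (fun c i => if h : i ∈ S then a i else c ⟨i, h⟩)
    (fun x i => x i.1) ?_ ?_ ?_ ?_ ?_
  · intro c _
    simp +contextual
  · simp
  · intro c _
    funext i
    simp [i.2]
  · intro x hx
    funext i
    by_cases hi : i ∈ S <;> simp_all
  · intro c _
    congr 3
    funext i
    by_cases hi : i ∈ S <;> simp [hi]

theorem reducedEntry_eq_sum_reducedEntry_insert (ψ : (∀ i, Fin (d i)) → ℂ) {S : Finset ι}
    {i : ι} (hi : i ∉ S) (a b : ∀ j, Fin (d j)) :
    reducedEntry d ψ S a b = ∑ v : Fin (d i),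
      reducedEntry d ψ (insert i S) (Function.update a i v) (Function.update b i v) := by
  simp only [reducedEntry_eq_sum_filter]
  rw [← sum_fiberwise _ (fun x => x i)]
  refine sum_congr rfl fun v _ => ?_
  rw [filter_filter]
  refine sum_congr ?_ fun x hx => ?_
  · ext x
    have hne : ∀ j ∈ S, j ≠ i := fun j hj h => hi (h ▸ hj)
    simp +contextual [Function.update_of_ne, hne, and_comm]
  · have hxi : x i = v := by simpa using (mem_filter.1 hx).2 i (mem_insert_self i S)
    congr 3
    funext j
    by_cases hj : j = i
    · subst hj
      simp [hi, hxi]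
    · by_cases hjS : j ∈ S <;> simp [hj, hjS]

def IsMaximallyMixedOn (d : ι → ℕ) (ψ : (∀ i, Fin (d i)) → ℂ) (S : Finset ι) : Prop :=
  ∀ a b : ∀ i, Fin (d i),
    reducedEntry d ψ S a b = if ∀ i ∈ S, a i = b i then 1 / ∏ i ∈ S, (d i : ℂ) else 0

theorem isKUniform_iff {k : ℕ} {ψ : (∀ i, Fin (d i)) → ℂ} :
    IsKUniform d k ψ ↔ ∀ S : Finset ι, #S = k → IsMaximallyMixedOn d ψ S :=
  Iff.rfl

theorem IsMaximallyMixedOn.of_insert {ψ : (∀ i, Fin (d i)) → ℂ} {S : Finset ι} {i : ι}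
    (h : IsMaximallyMixedOn d ψ (insert i S)) (hi : i ∉ S) (hd : d i ≠ 0) :
    IsMaximallyMixedOn d ψ S := by
  intro a b
  have hne : ∀ j ∈ S, j ≠ i := fun j hj h => hi (h ▸ hj)
  have hagree : ∀ v : Fin (d i), (∀ j ∈ insert i S,
      Function.update a i v j = Function.update b i v j) ↔ ∀ j ∈ S, a j = b j := by
    intro v
    simp +contextual [Function.update_of_ne, hne]
  simp only [reducedEntry_eq_sum_reducedEntry_insert ψ hi, h _ _, hagree, prod_insert hi]
  split_ifs
  · rw [sum_const, card_univ, Fintype.card_fin, nsmul_eq_mul]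
    field_simp
  · simp

theorem dim_ne_zero_of_sum_ne_zero {M : Type*} [AddCommMonoid M] {f : (∀ i, Fin (d i)) → M}
    (h : ∑ x, f x ≠ 0) (i : ι) : d i ≠ 0 := by
  obtain ⟨x, -, -⟩ := exists_ne_zero_of_sum_ne_zero h
  exact (x i).pos.ne'

end ReducedEntry

theorem Finset.piecewise_eq_right_iff {α : Type*} {π : α → Type*} (s : Finset α)
    [∀ j, Decidable (j ∈ s)] (f g : ∀ j, π j) :
    s.piecewise f g = g ↔ ∀ j ∈ s, f j = g j := by
  refine ⟨fun h j hj => by simpa [hj] using congrFun h j, fun h => funext fun j => ?_⟩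
  by_cases hj : j ∈ s <;> simp [hj, h]

theorem forall_mem_eq_iff_of_map_piecewise {α β : Type*} {π : α → Type*} {ρ : β → Type*}
    [DecidableEq α] [DecidableEq β] {s : Finset α} {t : Finset β}
    (m : (∀ a, π a) ≃ (∀ b, ρ b))
    (hm : ∀ x y, m (s.piecewise x y) = t.piecewise (m x) (m y)) (x y : ∀ a, π a) :
    (∀ a ∈ s, x a = y a) ↔ ∀ b ∈ t, m x b = m y b := by
  rw [← s.piecewise_eq_right_iff, ← t.piecewise_eq_right_iff, ← hm, m.apply_eq_iff_eq]

section Transport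

variable {ι κ : Type} [Fintype ι] [DecidableEq ι] [Fintype κ] [DecidableEq κ]
  {d : ι → ℕ} {D : κ → ℕ} {S : Finset κ} {T : Finset ι}
  (m : (∀ o, Fin (D o)) ≃ (∀ i, Fin (d i)))

theorem reducedEntry_comp_equiv (hm : ∀ x y, m (S.piecewise x y) = T.piecewise (m x) (m y))
    (ψ : (∀ i, Fin (d i)) → ℂ) (a b : ∀ o, Fin (D o)) :
    reducedEntry D (ψ ∘ m) S a b = reducedEntry d ψ T (m a) (m b) := by
  simp only [reducedEntry_eq_sum_filter]
  refine sum_equiv m (fun x => ?_) fun x _ => ?_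
  · simp only [mem_filter, mem_univ, true_and, forall_mem_eq_iff_of_map_piecewise m hm]
  · simp only [Function.comp_apply, hm]

theorem IsMaximallyMixedOn.comp_equiv {ψ : (∀ i, Fin (d i)) → ℂ}
    (h : IsMaximallyMixedOn d ψ T) (hm : ∀ x y, m (S.piecewise x y) = T.piecewise (m x) (m y))
    (hprod : ∏ i ∈ T, d i = ∏ o ∈ S, D o) : IsMaximallyMixedOn D (ψ ∘ m) S := by
  intro a b
  have hprod' : ∏ i ∈ T, (d i : ℂ) = ∏ o ∈ S, (D o : ℂ) := by exact_mod_cast hprod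
  rw [reducedEntry_comp_equiv m hm, h]
  simp only [forall_mem_eq_iff_of_map_piecewise m hm, hprod']

end Transport

section Merge

variable {n : ℕ}

def mergeParty : Fin 2 ⊕ Fin n → Option (Fin n) := Sum.elim (fun _ => none) some

def splitParties (S : Finset (Option (Fin n))) : Finset (Fin 2 ⊕ Fin n) :=
  univ.filter (mergeParty · ∈ S)

@[simp] theorem mergeParty_inl (b : Fin 2) : mergeParty (n := n) (Sum.inl b) = none := rfl

@[simp] theorem mergeParty_inr (j : Fin n) : mergeParty (Sum.inr j) = some j := rfl

@[simp] theorem mem_splitParties {S : Finset (Option (Fin n))} {i : Fin 2 ⊕ Fin n} :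
    i ∈ splitParties S ↔ mergeParty i ∈ S := by
  simp [splitParties]

theorem card_mergeParty_fiber (o : Option (Fin n)) :
    #(univ.filter (mergeParty · = o)) = if o = none then 2 else 1 := by
  rw [card_filter, Fintype.sum_sum_type]
  cases o <;> simp [mergeParty]

theorem filter_splitParties_mergeParty_eq {S : Finset (Option (Fin n))} {o : Option (Fin n)}
    (ho : o ∈ S) :
    (splitParties S).filter (mergeParty · = o) = univ.filter (mergeParty · = o) := by
  ext i
  simp +contextual [ho]

theorem card_splitParties (S : Finset (Option (Fin n))) :
    #(splitParties S) = #S + if none ∈ S then 1 else 0 := by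
  rw [card_eq_sum_card_fiberwise fun _ => mem_splitParties.1]
  calc ∑ o ∈ S, #((splitParties S).filter (mergeParty · = o))
      = ∑ o ∈ S, (1 + if none = o then 1 else 0) := by
        refine sum_congr rfl fun o ho => ?_
        rw [filter_splitParties_mergeParty_eq ho, card_mergeParty_fiber]
        cases o <;> simp
    _ = #S + if none ∈ S then 1 else 0 := by
        rw [sum_add_distrib, sum_ite_eq, card_eq_sum_ones]

variable (d1 d2 : ℕ) (e : Fin n → ℕ)

theorem prod_dimsSplit_mergeParty_fiber (o : Option (Fin n)) :
    ∏ i ∈ univ.filter (mergeParty · = o), dimsSplit d1 d2 e i = dimsMerged d1 d2 e o := by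
  rw [prod_filter, Fintype.prod_sum_type]
  cases o <;> simp [mergeParty, dimsSplit, dimsMerged, Fin.prod_univ_two]

theorem prod_dimsSplit_splitParties (S : Finset (Option (Fin n))) :
    ∏ i ∈ splitParties S, dimsSplit d1 d2 e i = ∏ o ∈ S, dimsMerged d1 d2 e o := by
  rw [← prod_fiberwise_of_maps_to fun _ => mem_splitParties.1]
  refine prod_congr rfl fun o ho => ?_
  rw [filter_splitParties_mergeParty_eq ho, prod_dimsSplit_mergeParty_fiber]

def pairEquiv : Fin (d1 * d2) ≃ ∀ b : Fin 2, Fin (dimsSplit d1 d2 e (Sum.inl b)) :=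
  finProdFinEquiv.symm.trans
    (piFinTwoEquiv fun b => Fin (dimsSplit d1 d2 e (Sum.inl b))).symm

def mergeEquiv : (∀ o, Fin (dimsMerged d1 d2 e o)) ≃ (∀ i, Fin (dimsSplit d1 d2 e i)) :=
  Equiv.piOptionEquivProd.trans <|
    ((pairEquiv d1 d2 e).prodCongr (Equiv.refl _)).trans
      (Equiv.sumPiEquivProdPi fun i => Fin (dimsSplit d1 d2 e i)).symm

@[simp] theorem mergeEquiv_inl (x : ∀ o, Fin (dimsMerged d1 d2 e o)) (b : Fin 2) :
    mergeEquiv d1 d2 e x (Sum.inl b) = pairEquiv d1 d2 e (x none) b := rfl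

@[simp] theorem mergeEquiv_inr (x : ∀ o, Fin (dimsMerged d1 d2 e o)) (j : Fin n) :
    mergeEquiv d1 d2 e x (Sum.inr j) = x (some j) := rfl

theorem mergeEquiv_piecewise (S : Finset (Option (Fin n)))
    (x y : ∀ o, Fin (dimsMerged d1 d2 e o)) :
    mergeEquiv d1 d2 e (S.piecewise x y) =
      (splitParties S).piecewise (mergeEquiv d1 d2 e x) (mergeEquiv d1 d2 e y) := by
  funext i
  cases i with
  | inl b => by_cases h : none ∈ S <;> simp [h]
  | inr j => by_cases h : some j ∈ S <;> simp [h] <;> rfl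

end Merge

/-- If a `k`-uniform state exists on `C^{d1} ⊗ C^{d2} ⊗ C^{e 0} ⊗ ⋯`, then a
`(k-1)`-uniform state exists on the merged system `C^{d1·d2} ⊗ C^{e 0} ⊗ ⋯`. -/
theorem merge_two_parties_kUniform {n k : ℕ} (d1 d2 : ℕ) (e : Fin n → ℕ)
    (hk : 1 ≤ k)
    (h : ∃ ψ : (∀ i, Fin (dimsSplit d1 d2 e i)) → ℂ,
      (∑ x, ‖ψ x‖ ^ 2 = 1) ∧ IsKUniform (dimsSplit d1 d2 e) k ψ) :
    ∃ φ : (∀ o, Fin (dimsMerged d1 d2 e o)) → ℂ,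
      (∑ x, ‖φ x‖ ^ 2 = 1) ∧ IsKUniform (dimsMerged d1 d2 e) (k - 1) φ := by
  obtain ⟨ψ, hnorm, hunif⟩ := h
  refine ⟨ψ ∘ mergeEquiv d1 d2 e, by rwa [← (mergeEquiv d1 d2 e).sum_comp] at hnorm, ?_⟩
  rw [isKUniform_iff] at hunif ⊢
  intro S hS
  refine IsMaximallyMixedOn.comp_equiv _ ?_ (mergeEquiv_piecewise d1 d2 e S)
    (prod_dimsSplit_splitParties d1 d2 e S)
  have hcard := card_splitParties S
  by_cases hnone : none ∈ S
  · exact hunif _ (by rw [hcard, if_pos hnone, hS]; omega)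
  · have hout : Sum.inl 0 ∉ splitParties S := by simpa
    refine IsMaximallyMixedOn.of_insert (hunif _ ?_) hout
      (dim_ne_zero_of_sum_ne_zero (hnorm ▸ one_ne_zero) _)
    rw [card_insert_of_notMem hout, hcard, if_neg hnone, hS]
    omega
end

section
/- There is no absolutely maximally entangled state in C^3 ⊗ (C^2)^{⊗8}, i.e., no pure state of these 9 parties such that every reduction to 4 parties is maximally mixed. Concretely, with A_0' = 1, A_1' = 13/3, A_2' = 25/3, A_3' = 28/3, A_4' = 161/24 and A_j' = A_{9−j}' for 5 ≤ j ≤ 9, the shadow coefficient S_1 = Σ_{k=0}^9 K_8(k;9) A_k' equals −23/12 < 0, violating the shadow inequality S_1 ≥ 0 required for the existence of such a state. -/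
/-
For a pure state `ψ` on `n` parties let `P(T) = Tr ρ_T²`. On two copies of `ψ`, `P(T)` is the
expectation value of the operator `F_T` swapping the `T`-parts, and `F_T F_U = F_{T ∆ U}`. Hence for
signs `s_i = ±1` the vector `∑_T (∏_{i∈T} s_i) F_T (ψ ⊗ ψ)` has squared norm
`2ⁿ ∑_T (∏_{i∈T} s_i) P(T)`, which is therefore nonnegative (Rains' shadow inequality).
If `ψ` is `⌊n/2⌋`-uniform then every `P(T)` is forced: `P(T) = P(Tᶜ)`, and
`P(T) = 1 / ∏_{i∈T} d_i` for `|T| ≤ ⌊n/2⌋`. Taking `s = +1` at one party `i₀` and `-1` elsewhere and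
summing over `i₀` weights `P(T)` by `(-1)^|T| (n - 2|T|) = K_{n-1}(|T|; n)`, so the sum is `S₁`,
which for `ℂ³ ⊗ (ℂ²)^{⊗8}` is `-23/12`.
-/

open Finset

/-- Local dimensions of `C³ ⊗ (C²)^{⊗8}`. -/
def dims9 : Fin 9 → ℕ := fun i => if i = 0 then 3 else 2

open scoped ComplexOrder

lemma Finset.prod_mul_prod_eq_prod_symmDiff {ι M : Type*} [Fintype ι] [DecidableEq ι]
    [CommMonoid M] (f : ι → M) (hf : ∀ i, f i * f i = 1) (A B : Finset ι) :
    (∏ i ∈ A, f i) * ∏ i ∈ B, f i = ∏ i ∈ symmDiff A B, f i := by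
  rw [← Fintype.prod_ite_mem (symmDiff A B), ← Fintype.prod_ite_mem A, ← Fintype.prod_ite_mem B,
    ← prod_mul_distrib]
  refine prod_congr rfl fun i _ => ?_
  by_cases hA : i ∈ A <;> by_cases hB : i ∈ B <;> simp [hA, hB, mem_symmDiff, hf]

namespace AME

variable {ι : Type} [DecidableEq ι] {d : ι → ℕ}

def swapOn (T : Finset ι) (p : (∀ i, Fin (d i)) × (∀ i, Fin (d i))) :
    (∀ i, Fin (d i)) × (∀ i, Fin (d i)) :=
  (T.piecewise p.2 p.1, T.piecewise p.1 p.2)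

lemma swapOn_swapOn (T U : Finset ι) (p : (∀ i, Fin (d i)) × (∀ i, Fin (d i))) :
    swapOn T (swapOn U p) = swapOn (symmDiff T U) p := by
  ext i <;> by_cases hT : i ∈ T <;> by_cases hU : i ∈ U <;>
    simp [swapOn, piecewise, hT, hU, mem_symmDiff]

lemma swapOn_involutive (T : Finset ι) : Function.Involutive (swapOn (d := d) T) := by
  intro p
  rw [swapOn_swapOn, symmDiff_self]
  simp [swapOn]

abbrev joinOn (T : Finset ι) :
    (∀ i : T, Fin (d i)) × (∀ i : {i // i ∉ T}, Fin (d i.1)) ≃ ∀ i, Fin (d i) :=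
  (Equiv.piEquivPiSubtypeProd (· ∈ T) (fun i => Fin (d i))).symm

lemma piecewise_joinOn (T : Finset ι) (a b : ∀ i : T, Fin (d i))
    (c e : ∀ i : {i // i ∉ T}, Fin (d i.1)) :
    T.piecewise (joinOn T (a, c)) (joinOn T (b, e)) = joinOn T (a, e) := by
  ext i
  by_cases hi : i ∈ T <;> simp [hi, Equiv.piEquivPiSubtypeProd_symm_apply]

def partySign (i₀ i : ι) : ℤ := if i = i₀ then 1 else -1

lemma partySign_mul_self (i₀ i : ι) : partySign i₀ i * partySign i₀ i = 1 := by
  unfold partySign; split_ifs <;> rfl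

variable [Fintype ι]

lemma swapOn_compl (T : Finset ι) (p : (∀ i, Fin (d i)) × (∀ i, Fin (d i))) :
    swapOn Tᶜ p = (swapOn T p).swap := by
  simp [swapOn, piecewise_compl]

def twoCopy (ψ : (∀ i, Fin (d i)) → ℂ) (p : (∀ i, Fin (d i)) × (∀ i, Fin (d i))) : ℂ :=
  ψ p.1 * ψ p.2

/-- `Tr ρ_T²` (the `P(T)` above). -/
noncomputable def purity (ψ : (∀ i, Fin (d i)) → ℂ) (T : Finset ι) : ℂ :=
  ∑ p, star (twoCopy ψ p) * twoCopy ψ (swapOn T p)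

lemma purity_compl (ψ : (∀ i, Fin (d i)) → ℂ) (T : Finset ι) : purity ψ Tᶜ = purity ψ T := by
  simp only [purity, twoCopy, swapOn_compl, Prod.fst_swap, Prod.snd_swap,
    mul_comm (ψ (swapOn T _).2)]

lemma sum_star_twoCopy_swapOn_mul (ψ : (∀ i, Fin (d i)) → ℂ) (T U : Finset ι) :
    ∑ p, star (twoCopy ψ (swapOn T p)) * twoCopy ψ (swapOn U p) = purity ψ (symmDiff T U) := by
  rw [← (swapOn_involutive T).bijective.sum_comp, purity]
  simp only [swapOn_involutive T _, swapOn_swapOn, symmDiff_comm U T]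

lemma sum_sign_mul_sign_mul_symmDiff (s : ι → ℤ) (hs : ∀ i, s i * s i = 1)
    (f : Finset ι → ℂ) (T : Finset ι) :
    ∑ U, ((∏ i ∈ T, s i : ℤ) : ℂ) * ((∏ i ∈ U, s i : ℤ) : ℂ) * f (symmDiff T U)
      = ∑ V, ((∏ i ∈ V, s i : ℤ) : ℂ) * f V := by
  have hinv : Function.Involutive (symmDiff T) := symmDiff_symmDiff_cancel_left T
  rw [← hinv.bijective.sum_comp]
  refine sum_congr rfl fun V _ => ?_
  rw [← Int.cast_mul, prod_mul_prod_eq_prod_symmDiff s hs, symmDiff_symmDiff_cancel_left]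

noncomputable def shadowAmp (s : ι → ℤ) (ψ : (∀ i, Fin (d i)) → ℂ)
    (p : (∀ i, Fin (d i)) × (∀ i, Fin (d i))) : ℂ :=
  ∑ T, ((∏ i ∈ T, s i : ℤ) : ℂ) * twoCopy ψ (swapOn T p)

theorem two_pow_mul_sum_sign_mul_purity (s : ι → ℤ) (hs : ∀ i, s i * s i = 1)
    (ψ : (∀ i, Fin (d i)) → ℂ) :
    2 ^ Fintype.card ι * ∑ T, ((∏ i ∈ T, s i : ℤ) : ℂ) * purity ψ T
      = ∑ p, star (shadowAmp s ψ p) * shadowAmp s ψ p := by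
  have hexpand : ∀ p, star (shadowAmp s ψ p) * shadowAmp s ψ p
      = ∑ T, ∑ U, ((∏ i ∈ T, s i : ℤ) : ℂ) * ((∏ i ∈ U, s i : ℤ) : ℂ) *
          (star (twoCopy ψ (swapOn T p)) * twoCopy ψ (swapOn U p)) := by
    intro p
    simp only [shadowAmp, star_sum, star_mul', star_intCast, sum_mul_sum]
    exact sum_congr rfl fun T _ => sum_congr rfl fun U _ => by ring
  symm
  calc ∑ p, star (shadowAmp s ψ p) * shadowAmp s ψ p
      = ∑ T, ∑ U, ((∏ i ∈ T, s i : ℤ) : ℂ) * ((∏ i ∈ U, s i : ℤ) : ℂ) *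
          ∑ p, star (twoCopy ψ (swapOn T p)) * twoCopy ψ (swapOn U p) := by
        simp only [hexpand, mul_sum]
        rw [sum_comm]
        exact sum_congr rfl fun T _ => sum_comm
    _ = ∑ T : Finset ι, ∑ V, ((∏ i ∈ V, s i : ℤ) : ℂ) * purity ψ V := by
        simp only [sum_star_twoCopy_swapOn_mul, sum_sign_mul_sign_mul_symmDiff s hs]
    _ = 2 ^ Fintype.card ι * ∑ T, ((∏ i ∈ T, s i : ℤ) : ℂ) * purity ψ T := by
        simp [card_univ, Fintype.card_finset]

theorem sum_sign_mul_purity_nonneg (s : ι → ℤ) (hs : ∀ i, s i * s i = 1)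
    (ψ : (∀ i, Fin (d i)) → ℂ) : 0 ≤ ∑ T, ((∏ i ∈ T, s i : ℤ) : ℂ) * purity ψ T := by
  have h : 0 ≤ 2 ^ Fintype.card ι * ∑ T, ((∏ i ∈ T, s i : ℤ) : ℂ) * purity ψ T :=
    two_pow_mul_sum_sign_mul_purity s hs ψ ▸
      sum_nonneg fun p _ => star_mul_self_nonneg (shadowAmp s ψ p)
  have h2 : (0 : ℂ) ≤ ((2 : ℂ) ^ Fintype.card ι)⁻¹ := by positivity
  simpa using mul_nonneg h2 h

noncomputable def reducedDensity (ψ : (∀ i, Fin (d i)) → ℂ) (T : Finset ι)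
    (a b : ∀ i : T, Fin (d i)) : ℂ :=
  ∑ c, ψ (joinOn T (a, c)) * starRingEnd ℂ (ψ (joinOn T (b, c)))

lemma reducedEntry_eq_reducedDensity (ψ : (∀ i, Fin (d i)) → ℂ) (T : Finset ι)
    (x y : ∀ i, Fin (d i)) :
    reducedEntry d ψ T x y = reducedDensity ψ T (fun i => x i) (fun i => y i) :=
  rfl

lemma purity_eq_sum_reducedDensity (ψ : (∀ i, Fin (d i)) → ℂ) (T : Finset ι) :
    purity ψ T = ∑ a, ∑ b, reducedDensity ψ T b a * reducedDensity ψ T a b := by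
  rw [purity, ← (Equiv.prodCongr (joinOn T) (joinOn T)).sum_comp]
  simp only [Fintype.sum_prod_type, Equiv.prodCongr_apply, Prod.map, twoCopy, swapOn,
    piecewise_joinOn, reducedDensity, sum_mul_sum]
  refine sum_congr rfl fun a _ => ?_
  rw [sum_comm]
  refine sum_congr rfl fun b _ => sum_congr rfl fun c _ => sum_congr rfl fun e _ => ?_
  simp only [star_mul', Complex.star_def]
  ring

lemma reducedDensity_of_isKUniform (hd : ∀ i, 0 < d i) {ψ : (∀ i, Fin (d i)) → ℂ}
    {T : Finset ι} (h : IsKUniform d T.card ψ) (a b : ∀ i : T, Fin (d i)) :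
    reducedDensity ψ T a b = if a = b then (∏ i ∈ T, (d i : ℂ))⁻¹ else 0 := by
  let c₀ : ∀ i : {i // i ∉ T}, Fin (d i.1) := fun i => ⟨0, hd i⟩
  have hjoin : ∀ a' b', (∀ i ∈ T, joinOn T (a', c₀) i = joinOn T (b', c₀) i) ↔ a' = b' := by
    refine fun a' b' => ⟨fun hab => funext fun i => ?_, fun hab i _ => hab ▸ rfl⟩
    simpa [Equiv.piEquivPiSubtypeProd_symm_apply, i.2] using hab i i.2
  have := h T rfl (joinOn T (a, c₀)) (joinOn T (b, c₀))
  simp only [reducedEntry_eq_reducedDensity, hjoin, one_div] at this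
  simpa [Equiv.piEquivPiSubtypeProd_symm_apply] using this

theorem purity_of_isKUniform (hd : ∀ i, 0 < d i) {ψ : (∀ i, Fin (d i)) → ℂ}
    {T : Finset ι} (h : IsKUniform d T.card ψ) : purity ψ T = (∏ i ∈ T, (d i : ℂ))⁻¹ := by
  have hcard : (Fintype.card (∀ i : T, Fin (d i)) : ℂ) = ∏ i ∈ T, (d i : ℂ) := by
    simp [Fintype.card_pi, prod_attach]
  have hne : (∏ i ∈ T, (d i : ℂ)) ≠ 0 :=
    prod_ne_zero_iff.mpr fun i _ => Nat.cast_ne_zero.mpr (hd i).ne'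
  simp only [purity_eq_sum_reducedDensity, reducedDensity_of_isKUniform hd h, mul_ite, ite_mul,
    mul_zero, zero_mul, sum_ite_eq, mem_univ, if_true]
  rw [sum_const, card_univ, nsmul_eq_mul, hcard]
  field_simp

def piComplEquivProdPiComplInsert {S : Finset ι} {i₀ : ι} (h₀ : i₀ ∉ S) :
    (∀ i : {i // i ∉ S}, Fin (d i.1)) ≃
      Fin (d i₀) × (∀ i : {i // i ∉ insert i₀ S}, Fin (d i.1)) where
  toFun c := (c ⟨i₀, h₀⟩, fun i => c ⟨i.1, fun h => i.2 (mem_insert_of_mem h)⟩)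
  invFun p i :=
    if h : i.1 = i₀ then Fin.cast (congrArg d h).symm p.1
    else p.2 ⟨i.1, by simp [h, i.2]⟩
  left_inv c := by
    funext ⟨i, hi⟩
    by_cases h : i = i₀
    · subst h; simp
    · simp [h]
  right_inv := by
    rintro ⟨v, c⟩
    refine Prod.ext (by simp) (funext fun ⟨i, hi⟩ => ?_)
    have h : i ≠ i₀ := fun h => hi (h ▸ mem_insert_self i₀ S)
    simp [h]

lemma reducedEntry_eq_sum_insert (ψ : (∀ i, Fin (d i)) → ℂ) {S : Finset ι} {i₀ : ι}
    (h₀ : i₀ ∉ S) (x y : ∀ i, Fin (d i)) :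
    reducedEntry d ψ S x y =
      ∑ v, reducedEntry d ψ (insert i₀ S) (Function.update x i₀ v) (Function.update y i₀ v) := by
  have key : ∀ (z : ∀ i, Fin (d i)) v c,
      (fun i => if h : i ∈ S then z i else ((piComplEquivProdPiComplInsert h₀).symm (v, c)) ⟨i, h⟩)
        = fun i => if h : i ∈ insert i₀ S then Function.update z i₀ v i else c ⟨i, h⟩ := by
    intro z v c
    funext i
    by_cases hS : i ∈ S
    · have h : i ≠ i₀ := fun h => h₀ (h ▸ hS)
      simp [hS, h]
    · by_cases hi : i = i₀
      · subst hi; simp [hS, piComplEquivProdPiComplInsert]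
      · simp [hS, hi, piComplEquivProdPiComplInsert]
  unfold reducedEntry
  rw [← (piComplEquivProdPiComplInsert h₀).symm.sum_comp, Fintype.sum_prod_type]
  simp only [key]

theorem _root_.IsKUniform.of_succ (hd : ∀ i, 0 < d i) {ψ : (∀ i, Fin (d i)) → ℂ} {k : ℕ}
    (hk : k < Fintype.card ι) (h : IsKUniform d (k + 1) ψ) : IsKUniform d k ψ := by
  intro S hS x y
  obtain ⟨i₀, hi₀⟩ : Sᶜ.Nonempty := by
    rw [← card_pos, card_compl, hS]
    omega
  have h₀ : i₀ ∉ S := mem_compl.mp hi₀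
  have hcond : ∀ v, (∀ i ∈ insert i₀ S, Function.update x i₀ v i = Function.update y i₀ v i)
      ↔ ∀ i ∈ S, x i = y i := by
    intro v
    simp only [forall_mem_insert, Function.update_self, true_and]
    refine forall₂_congr fun i hi => ?_
    have hne : i ≠ i₀ := fun he => h₀ (he ▸ hi)
    rw [Function.update_of_ne hne, Function.update_of_ne hne]
  have hd₀ : (d i₀ : ℂ) ≠ 0 := Nat.cast_ne_zero.mpr (hd i₀).ne'
  rw [reducedEntry_eq_sum_insert ψ h₀]
  simp only [h (insert i₀ S) (by rw [card_insert_of_notMem h₀, hS]), hcond, prod_insert h₀]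
  split_ifs
  · rw [sum_const, card_univ, Fintype.card_fin, nsmul_eq_mul]
    field_simp
  · simp

theorem _root_.IsKUniform.of_le (hd : ∀ i, 0 < d i) {ψ : (∀ i, Fin (d i)) → ℂ} {j k : ℕ}
    (hjk : j ≤ k) (hk : k ≤ Fintype.card ι) (h : IsKUniform d k ψ) : IsKUniform d j ψ := by
  induction k, hjk using Nat.le_induction with
  | base => exact h
  | succ k _ ih => exact ih (by omega) (h.of_succ hd (by omega))

def purityDen (d : ι → ℕ) (k : ℕ) (T : Finset ι) : ℕ :=
  ∏ i ∈ if T.card ≤ k then T else Tᶜ, d i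

theorem _root_.IsKUniform.purity_eq (hd : ∀ i, 0 < d i) {ψ : (∀ i, Fin (d i)) → ℂ} {k : ℕ}
    (h : IsKUniform d k ψ) (hk : k ≤ Fintype.card ι) (hn : Fintype.card ι ≤ 2 * k + 1)
    (T : Finset ι) :
    purity ψ T = (purityDen d k T : ℂ)⁻¹ := by
  rw [purityDen, Nat.cast_prod]
  split_ifs with hT
  · exact purity_of_isKUniform hd (h.of_le hd hT hk)
  · have hTc : Tᶜ.card ≤ k := by rw [card_compl]; omega
    rw [← purity_compl]
    exact purity_of_isKUniform hd (h.of_le hd hTc hk)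

end AME

open AME

set_option maxRecDepth 100000 in
lemma purityDen_dims9_dvd : ∀ T : Finset (Fin 9), purityDen dims9 4 T ∣ 48 := by
  decide

set_option maxRecDepth 100000 in
lemma sum_partySign_mul_div_purityDen_dims9 :
    ∑ i₀ : Fin 9, ∑ T : Finset (Fin 9),
      (∏ i ∈ T, partySign i₀ i) * ((48 / purityDen dims9 4 T : ℕ) : ℤ) = -92 := by
  decide

lemma sum_partySign_mul_inv_purityDen_dims9 :
    ∑ i₀ : Fin 9, ∑ T : Finset (Fin 9),
      ((∏ i ∈ T, partySign i₀ i : ℤ) : ℂ) * (purityDen dims9 4 T : ℂ)⁻¹ = -23 / 12 := by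
  have hinv (T : Finset (Fin 9)) :
      (purityDen dims9 4 T : ℂ)⁻¹ = ((48 / purityDen dims9 4 T : ℕ) : ℂ) / 48 := by
    have hpos : (purityDen dims9 4 T : ℂ) ≠ 0 := by
      exact_mod_cast (Nat.pos_of_dvd_of_pos (purityDen_dims9_dvd T) (by norm_num)).ne'
    rw [Nat.cast_div (purityDen_dims9_dvd T) hpos, Nat.cast_ofNat]
    field_simp
  simp only [hinv, ← mul_div_assoc, ← sum_div, ← Int.cast_natCast (R := ℂ) (48 / _),
    ← Int.cast_mul, ← Int.cast_sum, sum_partySign_mul_div_purityDen_dims9]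
  norm_num

lemma dims9_pos (i : Fin 9) : 0 < dims9 i := by
  unfold dims9; split_ifs <;> norm_num

/-- No absolutely maximally entangled state (i.e. `4`-uniform state, `4 = ⌊9/2⌋`)
exists in `C³ ⊗ (C²)^{⊗8}`; concretely, the shadow coefficient
`S₁ = ∑ₖ K₈(k;9) Aₖ'` equals `-23/12 < 0`, violating the shadow inequality. -/
theorem no_AME_3_2222_2222 :
    (¬ ∃ ψ : (∀ i, Fin (dims9 i)) → ℂ,
        (∑ x, ‖ψ x‖ ^ 2 = 1) ∧ IsKUniform dims9 4 ψ) ∧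
    (9 * (1 : ℚ) + (-7) * (13 / 3) + 5 * (25 / 3) + (-3) * (28 / 3)
        + 1 * (161 / 24) + 1 * (161 / 24) + (-3) * (28 / 3) + 5 * (25 / 3)
        + (-7) * (13 / 3) + 9 * 1 = -23 / 12) ∧
    (-23 / 12 : ℚ) < 0 := by
  refine ⟨?_, by norm_num, by norm_num⟩
  rintro ⟨ψ, -, hψ⟩
  have hpurity (T : Finset (Fin 9)) : purity ψ T = (purityDen dims9 4 T : ℂ)⁻¹ :=
    hψ.purity_eq dims9_pos (by simp) (by simp) T
  have hshadow : 0 ≤ ∑ i₀ : Fin 9, ∑ T, ((∏ i ∈ T, partySign i₀ i : ℤ) : ℂ) * purity ψ T :=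
    sum_nonneg fun i₀ _ => sum_sign_mul_purity_nonneg _ (partySign_mul_self i₀) ψ
  simp only [hpurity, sum_partySign_mul_inv_purityDen_dims9] at hshadow
  norm_num [Complex.le_def] at hshadow
end

section
/- Let |ψ⟩ be a k-uniform state with minimum support in C^{d_1}⊗...⊗C^{d_N} (d_1 ≥ ... ≥ d_N), written as |ψ⟩ = Σ_{(j_1,...,j_k)} c_{j_1,...,j_k} |j_1,...,j_k⟩ ⊗ |ψ(j_1,...,j_k)⟩ where each |ψ(j_1,...,j_k)⟩ is a computational basis vector of the last N−k systems and |c_{j_1,...,j_k}| = 1/√(d_1···d_k). For v = (v_1,...,v_N) ∈ Z_{d_1}×...×Z_{d_N}, define U(v) = Z_1^{v_1}⊗...⊗Z_k^{v_k}⊗X_{k+1}^{v_{k+1}}⊗...⊗X_N^{v_N} with Z_i|j⟩ = ω_i^j|j⟩ (ω_i = e^{2πi/d_i}) and X_i|j⟩ = |j+1 mod d_i⟩. Then the d_1 d_2 ··· d_N states {U(v)|ψ⟩} are pairwise orthogonal, hence form an orthonormal basis of C^{d_1}⊗...⊗C^{d_N}, and each U(v)|ψ⟩ is k-uniform with minimum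 support. -/
/-!
Each `U(v)` is a local monomial unitary: coordinatewise phases composed with coordinatewise
permutations. Such operators preserve the norm and the support size, and they act on every reduced
density matrix by a local unitary conjugation, so they preserve `k`-uniformity.

For orthogonality, note first that minimum support forces the support of `ψ` to be the graph of a
function of the first `k` coordinates. If `u` and `v` differ in a later coordinate, the shifted
states `X^u ψ` and `X^v ψ` therefore have disjoint supports. Otherwise `⟨U(u)ψ, U(v)ψ⟩` is the
average of a nontrivial character of the first `k` coordinates against `|ψ|²`. The marginal of
`|ψ|²` on those coordinates is uniform by `k`-uniformity, so this average vanishes. Finally,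
`d₁⋯d_N` orthonormal vectors span the whole space.
-/

open Finset

open scoped Classical

/-- The action of the generalized Pauli operator
`U(v) = Z₁^{v₁} ⊗ ⋯ ⊗ Z_k^{v_k} ⊗ X_{k+1}^{v_{k+1}} ⊗ ⋯ ⊗ X_N^{v_N}` on the
coefficient vector `ψ`. -/
noncomputable def pauliAct {N : ℕ} (d : Fin N → ℕ) (k : ℕ)
    (v : ∀ i, Fin (d i)) (ψ : (∀ i, Fin (d i)) → ℂ) :
    (∀ i, Fin (d i)) → ℂ :=
  fun x =>
    (∏ i ∈ univ.filter (fun i : Fin N => (i : ℕ) < k),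
        Complex.exp (2 * Real.pi * Complex.I * ((x i : ℕ) : ℂ) * ((v i : ℕ) : ℂ)
          / ((d i : ℕ) : ℂ)))
      * ψ (fun i => if (i : ℕ) < k then x i else x i - v i)

open ComplexConjugate

section Monomial

variable {ι : Type} [Fintype ι] {d : ι → ℕ}

/-- Coefficients of `(⊗ᵢ Dᵢ Pᵢ) ψ` for a local monomial unitary: `Dᵢ` is diagonal with entries
`φ i` and `Pᵢ` is the permutation matrix sending `|τ i j⟩` to `|j⟩`. -/
def monomialAct (φ : ∀ i, Fin (d i) → ℂ) (τ : ∀ i, Equiv.Perm (Fin (d i)))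
    (ψ : (∀ i, Fin (d i)) → ℂ) (x : ∀ i, Fin (d i)) : ℂ :=
  (∏ i, φ i (x i)) * ψ (Equiv.piCongrRight τ x)

variable {φ : ∀ i, Fin (d i) → ℂ} {τ : ∀ i, Equiv.Perm (Fin (d i))} {ψ : (∀ i, Fin (d i)) → ℂ}

theorem norm_monomialAct (hφ : ∀ i j, ‖φ i j‖ = 1) (x : ∀ i, Fin (d i)) :
    ‖monomialAct φ τ ψ x‖ = ‖ψ (Equiv.piCongrRight τ x)‖ := by
  simp [monomialAct, norm_prod, hφ]

variable [DecidableEq ι]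

theorem sum_norm_sq_monomialAct (hφ : ∀ i j, ‖φ i j‖ = 1) :
    ∑ x, ‖monomialAct φ τ ψ x‖ ^ 2 = ∑ x, ‖ψ x‖ ^ 2 := by
  simp only [norm_monomialAct hφ]
  exact (Equiv.piCongrRight τ).sum_comp fun y => ‖ψ y‖ ^ 2

theorem card_support_monomialAct (hφ : ∀ i j, ‖φ i j‖ = 1) :
    #{x | monomialAct φ τ ψ x ≠ 0} = #{x | ψ x ≠ 0} := by
  refine card_equiv (Equiv.piCongrRight τ) fun x => ?_
  simp only [mem_filter, mem_univ, true_and]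
  rw [← norm_ne_zero_iff, norm_monomialAct hφ, norm_ne_zero_iff]

theorem reducedEntry_monomialAct (hφ : ∀ i j, ‖φ i j‖ = 1) (S : Finset ι)
    (a b : ∀ i, Fin (d i)) :
    reducedEntry d (monomialAct φ τ ψ) S a b =
      (∏ i ∈ S, φ i (a i) * conj (φ i (b i))) *
        reducedEntry d ψ S (Equiv.piCongrRight τ a) (Equiv.piCongrRight τ b) := by
  rw [reducedEntry, reducedEntry, mul_sum]
  refine Fintype.sum_equiv (Equiv.piCongrRight fun i : {i // i ∉ S} => τ i) _ _ fun c => ?_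
  have hglue : ∀ a : ∀ i, Fin (d i), Equiv.piCongrRight τ
      (fun i => if h : i ∈ S then a i else c ⟨i, h⟩) =
      fun i => if h : i ∈ S then Equiv.piCongrRight τ a i
        else Equiv.piCongrRight (fun i : {i // i ∉ S} => τ i) c ⟨i, h⟩ := by
    intro a; funext i; by_cases h : i ∈ S <;> simp [h]
  have hphase : (∏ i, φ i (if h : i ∈ S then a i else c ⟨i, h⟩)) *
      conj (∏ i, φ i (if h : i ∈ S then b i else c ⟨i, h⟩)) =
      ∏ i ∈ S, φ i (a i) * conj (φ i (b i)) := by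
    rw [map_prod, ← prod_mul_distrib, ← Fintype.prod_ite_mem S]
    refine prod_congr rfl fun i _ => ?_
    by_cases h : i ∈ S
    · simp [h]
    · simp [h, Complex.mul_conj', hφ]
  simp only [monomialAct, hglue, map_mul, ← hphase]
  ring

theorem IsKUniform.monomialAct {k : ℕ} (hu : IsKUniform d k ψ) (hφ : ∀ i j, ‖φ i j‖ = 1) :
    IsKUniform d k (monomialAct φ τ ψ) := by
  intro S hS a b
  rw [reducedEntry_monomialAct hφ, hu S hS]
  by_cases hab : ∀ i ∈ S, a i = b i
  · have hτ : ∀ i ∈ S, Equiv.piCongrRight τ a i = Equiv.piCongrRight τ b i := by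
      intro i hi; simp [hab i hi]
    have hphase : ∏ i ∈ S, φ i (a i) * conj (φ i (b i)) = 1 :=
      prod_eq_one fun i hi => by simp [hab i hi, Complex.mul_conj', hφ]
    rw [if_pos hτ, if_pos hab, hphase, one_mul]
  · have hτ : ¬ ∀ i ∈ S, Equiv.piCongrRight τ a i = Equiv.piCongrRight τ b i := by
      simpa using hab
    rw [if_neg hτ, if_neg hab, mul_zero]

end Monomial

section Uniform

variable {ι : Type} [Fintype ι] [DecidableEq ι] {d : ι → ℕ} [∀ i, NeZero (d i)] {k : ℕ}
  {ψ : (∀ i, Fin (d i)) → ℂ} {S : Finset ι}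

abbrev splitAt (d : ι → ℕ) (S : Finset ι) :
    (∀ i, Fin (d i)) ≃ (∀ i : {i // i ∈ S}, Fin (d i)) × (∀ i : {i // i ∉ S}, Fin (d i)) :=
  Equiv.piEquivPiSubtypeProd (· ∈ S) fun i => Fin (d i)

theorem IsKUniform.sum_mul_conj_splitAt_symm (hu : IsKUniform d k ψ) (hS : S.card = k)
    (a : ∀ i : {i // i ∈ S}, Fin (d i)) :
    ∑ c, ψ ((splitAt d S).symm (a, c)) * conj (ψ ((splitAt d S).symm (a, c))) =
      1 / ∏ i ∈ S, (d i : ℂ) := by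
  have hrow := hu S hS ((splitAt d S).symm (a, 0)) ((splitAt d S).symm (a, 0))
  have hglue : ∀ c, (fun i => if h : i ∈ S then (splitAt d S).symm (a, 0) i else c ⟨i, h⟩) =
      (splitAt d S).symm (a, c) := by
    intro c; funext i; by_cases h : i ∈ S <;> simp [h]
  rw [if_pos fun _ _ => rfl, reducedEntry] at hrow
  simpa only [hglue] using hrow

theorem IsKUniform.sum_prod_mul_conj_mul_eq_zero (hu : IsKUniform d k ψ) (hS : S.card = k)
    (ζ : ∀ i, Fin (d i) → ℂ) (hζ : ∀ i ∉ S, ∀ j, ζ i j = 1) {i₀ : ι} (hi₀ : i₀ ∈ S)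
    (hsum : ∑ j, ζ i₀ j = 0) :
    ∑ x, (∏ i, ζ i (x i)) * (conj (ψ x) * ψ x) = 0 := by
  have hrow : ∀ a : ∀ i : {i // i ∈ S}, Fin (d i),
      ∑ c, (∏ i, ζ i ((splitAt d S).symm (a, c) i)) *
        (conj (ψ ((splitAt d S).symm (a, c))) * ψ ((splitAt d S).symm (a, c))) =
      (∏ i : {i // i ∈ S}, ζ i (a i)) * (1 / ∏ i ∈ S, (d i : ℂ)) := by
    intro a
    have hζa : ∀ c, ∏ i, ζ i ((splitAt d S).symm (a, c) i) = ∏ i : {i // i ∈ S}, ζ i (a i) := by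
      intro c
      calc ∏ i, ζ i ((splitAt d S).symm (a, c) i)
          = ∏ i, if h : i ∈ S then ζ i (a ⟨i, h⟩) else 1 :=
            Fintype.prod_congr _ _ fun i => by by_cases h : i ∈ S <;> simp [h, hζ]
        _ = ∏ i : {i // i ∈ S}, ζ i (a i) := by
            simp only [Fintype.prod_dite, prod_const_one, mul_one]
            convert rfl
    rw [← hu.sum_mul_conj_splitAt_symm hS a, mul_sum]
    simp only [hζa, mul_comm (conj _)]
  rw [← (splitAt d S).symm.sum_comp, Fintype.sum_prod_type, sum_congr rfl fun a _ => hrow a,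
    ← sum_mul, ← Fintype.prod_sum, prod_eq_zero (mem_univ ⟨i₀, hi₀⟩) hsum, zero_mul]

theorem IsKUniform.injOn_restrict_support (hu : IsKUniform d k ψ) (hS : S.card = k)
    (hsupp : #{x | ψ x ≠ 0} = ∏ i ∈ S, d i) : Set.InjOn S.restrict {x | ψ x ≠ 0} := by
  -- Every restriction occurs on the support (its row has weight `1 / ∏ d`), and sizes agree.
  let r : {x // ψ x ≠ 0} → ∀ i : {i // i ∈ S}, Fin (d i) := fun x => S.restrict x.1
  have hr : Function.Surjective r := by
    intro a
    have hrow := hu.sum_mul_conj_splitAt_symm hS a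
    obtain ⟨c, -, hc⟩ := exists_ne_zero_of_sum_ne_zero (hrow.trans_ne
      (one_div_ne_zero (prod_ne_zero_iff.2 fun i _ => Nat.cast_ne_zero.2 (NeZero.ne _))))
    exact ⟨⟨_, left_ne_zero_of_mul hc⟩, funext fun i => by simp [r]⟩
  have hcard : Fintype.card {x // ψ x ≠ 0} = Fintype.card (∀ i : {i // i ∈ S}, Fin (d i)) := by
    simp [Fintype.card_subtype, hsupp, Fintype.card_pi, prod_attach]
  intro x hx y hy hxy
  exact congrArg Subtype.val
    (hr.injective_of_finite (Fintype.equivOfCardEq hcard) (a₁ := ⟨x, hx⟩) (a₂ := ⟨y, hy⟩) hxy)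

end Uniform

open Complex in
theorem sum_conj_exp_mul_exp_eq_zero {m : ℕ} {a b : Fin m} (hab : a ≠ b) :
    ∑ j : Fin m, conj (exp (2 * Real.pi * I * ((j : ℕ) : ℂ) * ((a : ℕ) : ℂ) / (m : ℂ))) *
      exp (2 * Real.pi * I * ((j : ℕ) : ℂ) * ((b : ℕ) : ℂ) / (m : ℂ)) = 0 := by
  have hm : m ≠ 0 := a.pos.ne'
  have hζ : IsPrimitiveRoot (exp (2 * Real.pi * I / m)) m := isPrimitiveRoot_exp m hm
  set r := exp (2 * Real.pi * I / m) ^ ((b : ℤ) - a)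
  have hterm : ∀ j : ℕ, conj (exp (2 * Real.pi * I * (j : ℂ) * ((a : ℕ) : ℂ) / (m : ℂ))) *
      exp (2 * Real.pi * I * (j : ℂ) * ((b : ℕ) : ℂ) / (m : ℂ)) = r ^ j := by
    intro j
    rw [← exp_conj, ← exp_add, ← zpow_natCast, ← zpow_mul, ← exp_int_mul]
    congr 1
    simp [map_div₀, map_ofNat]
    ring
  have hr : r ≠ 1 := by
    rw [Ne, hζ.zpow_eq_one_iff_dvd]
    intro hdvd
    have := Int.eq_zero_of_abs_lt_dvd hdvd (by rw [abs_lt]; omega)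
    exact hab (Fin.ext (by omega))
  have hrm : r ^ m = 1 := by
    rw [← zpow_natCast, ← zpow_mul, mul_comm _ (m : ℤ), zpow_mul, zpow_natCast, hζ.pow_eq_one,
      one_zpow]
  rw [sum_congr rfl fun (j : Fin m) _ => hterm j, Fin.sum_univ_eq_sum_range (r ^ ·),
    geom_sum_eq hr, hrm, sub_self, zero_div]

section Pauli

variable {N : ℕ} (d : Fin N → ℕ) (k : ℕ) (v : ∀ i, Fin (d i))

noncomputable def pauliPhase (i : Fin N) (j : Fin (d i)) : ℂ :=
  if (i : ℕ) < k then
    Complex.exp (2 * Real.pi * Complex.I * ((j : ℕ) : ℂ) * ((v i : ℕ) : ℂ) / ((d i : ℕ) : ℂ))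
  else 1

def pauliShift [∀ i, NeZero (d i)] (i : Fin N) : Equiv.Perm (Fin (d i)) :=
  if (i : ℕ) < k then 1 else Equiv.subRight (v i)

theorem norm_pauliPhase (i : Fin N) (j : Fin (d i)) : ‖pauliPhase d k v i j‖ = 1 := by
  unfold pauliPhase
  split_ifs
  · rw [Complex.norm_exp]
    simp
  · exact norm_one

theorem pauliAct_eq_monomialAct [∀ i, NeZero (d i)] (ψ : (∀ i, Fin (d i)) → ℂ) :
    pauliAct d k v ψ = monomialAct (pauliPhase d k v) (pauliShift d k v) ψ := by
  funext x
  simp only [pauliAct, monomialAct, pauliPhase, prod_filter]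
  congr 2
  funext i
  by_cases h : (i : ℕ) < k <;> simp [pauliShift, h]

end Pauli

theorem Fin.card_filter_val_lt_of_le {N k : ℕ} (hk : k ≤ N) :
    #(univ.filter fun i : Fin N => (i : ℕ) < k) = k := by
  simp [Fin.card_filter_val_lt, hk]

section PauliOrthogonality

variable {N k : ℕ} {d : Fin N → ℕ} [∀ i, NeZero (d i)] {ψ : (∀ i, Fin (d i)) → ℂ}
  {u v : ∀ i, Fin (d i)}

theorem conj_pauliAct_mul_pauliAct_eq_zero (hk : k ≤ N) (hu : IsKUniform d k ψ)
    (hsupp : #{x | ψ x ≠ 0} = ∏ i ∈ univ.filter (fun i : Fin N => (i : ℕ) < k), d i)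
    {i₀ : Fin N} (hi₀k : k ≤ (i₀ : ℕ)) (hi₀ : u i₀ ≠ v i₀) (x : ∀ i, Fin (d i)) :
    conj (pauliAct d k u ψ x) * pauliAct d k v ψ x = 0 := by
  set A := univ.filter fun i : Fin N => (i : ℕ) < k
  rw [pauliAct_eq_monomialAct, pauliAct_eq_monomialAct]
  by_contra hx
  simp only [mul_ne_zero_iff, map_ne_zero] at hx
  have hne : ∀ w, monomialAct (pauliPhase d k w) (pauliShift d k w) ψ x ≠ 0 →
      ψ (Equiv.piCongrRight (pauliShift d k w) x) ≠ 0 :=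
    fun w h => right_ne_zero_of_mul h
  have hrestrict : ∀ w, A.restrict (Equiv.piCongrRight (pauliShift d k w) x) = A.restrict x := by
    intro w
    funext i
    simp [pauliShift, (mem_filter.1 i.2).2]
  have heq := congrFun (hu.injOn_restrict_support (Fin.card_filter_val_lt_of_le hk) hsupp
    (hne u hx.1) (hne v hx.2) ((hrestrict u).trans (hrestrict v).symm)) i₀
  simp [pauliShift, not_lt.2 hi₀k] at heq
  exact hi₀ heq

theorem sum_conj_pauliAct_mul_pauliAct_eq_zero_of_lt (hk : k ≤ N) (hu : IsKUniform d k ψ)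
    (hshift : ∀ i : Fin N, k ≤ (i : ℕ) → u i = v i)
    {i₀ : Fin N} (hi₀k : (i₀ : ℕ) < k) (hi₀ : u i₀ ≠ v i₀) :
    ∑ x, conj (pauliAct d k u ψ x) * pauliAct d k v ψ x = 0 := by
  have hτ : pauliShift d k u = pauliShift d k v := by
    funext i
    by_cases h : (i : ℕ) < k
    · simp [pauliShift, h]
    · simp [pauliShift, h, hshift i (not_lt.1 h)]
  have hψτ := hu.monomialAct (φ := fun _ _ => 1) (τ := pauliShift d k v) fun _ _ => norm_one
  rw [pauliAct_eq_monomialAct, pauliAct_eq_monomialAct, hτ,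
    ← hψτ.sum_prod_mul_conj_mul_eq_zero (Fin.card_filter_val_lt_of_le hk)
      (fun i j => conj (pauliPhase d k u i j) * pauliPhase d k v i j) ?_
      (mem_filter.2 ⟨mem_univ _, hi₀k⟩) ?_]
  · refine sum_congr rfl fun x _ => ?_
    simp only [monomialAct, map_mul, map_prod, prod_const_one, one_mul, prod_mul_distrib]
    ring
  · intro i hi j
    have hik : ¬ (i : ℕ) < k := fun h => hi (mem_filter.2 ⟨mem_univ _, h⟩)
    simp [pauliPhase, hik]
  · simpa [pauliPhase, hi₀k] using sum_conj_exp_mul_exp_eq_zero hi₀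

theorem sum_conj_pauliAct_mul_pauliAct_eq_zero (hk : k ≤ N) (hu : IsKUniform d k ψ)
    (hsupp : #{x | ψ x ≠ 0} = ∏ i ∈ univ.filter (fun i : Fin N => (i : ℕ) < k), d i)
    (huv : u ≠ v) :
    ∑ x, conj (pauliAct d k u ψ x) * pauliAct d k v ψ x = 0 := by
  by_cases hshift : ∃ i₀ : Fin N, k ≤ (i₀ : ℕ) ∧ u i₀ ≠ v i₀
  · obtain ⟨i₀, hi₀k, hi₀⟩ := hshift
    exact sum_eq_zero fun x _ => conj_pauliAct_mul_pauliAct_eq_zero hk hu hsupp hi₀k hi₀ x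
  · push Not at hshift
    obtain ⟨i₀, hi₀⟩ := Function.ne_iff.1 huv
    have hi₀k : (i₀ : ℕ) < k := not_le.1 fun h => hi₀ (hshift i₀ h)
    exact sum_conj_pauliAct_mul_pauliAct_eq_zero_of_lt hk hu hshift hi₀k hi₀

end PauliOrthogonality

theorem span_range_eq_top_of_orthonormal {ι κ : Type*} [Fintype ι] [Fintype κ]
    (f : ι → κ → ℂ) (horth : ∀ a b, a ≠ b → ∑ x, conj (f a x) * f b x = 0)
    (hnorm : ∀ a, ∑ x, ‖f a x‖ ^ 2 = 1) (hcard : Fintype.card ι = Fintype.card κ) :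
    Submodule.span ℂ (Set.range f) = ⊤ := by
  have hon : Orthonormal ℂ fun a => (WithLp.toLp 2 (f a) : EuclideanSpace ℂ κ) := by
    refine ⟨fun a => ?_, fun a b hab => ?_⟩
    · rw [EuclideanSpace.norm_eq, Real.sqrt_eq_one]
      exact hnorm a
    · simpa [EuclideanSpace.inner_eq_star_dotProduct, dotProduct, mul_comm] using horth a b hab
  have hli : LinearIndependent ℂ f :=
    hon.linearIndependent.map' (WithLp.linearEquiv 2 ℂ (κ → ℂ)).toLinearMap
      (WithLp.linearEquiv 2 ℂ (κ → ℂ)).ker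
  exact hli.span_eq_top_of_card_eq_finrank' (by simp [hcard])

theorem kUniform_min_support_basis_general {N k : ℕ} (d : Fin N → ℕ)
    (hd : ∀ i, 0 < d i) (hk : k ≤ N)
    (ψ : (∀ i, Fin (d i)) → ℂ)
    (hnorm : ∑ x, ‖ψ x‖ ^ 2 = 1)
    (hu : IsKUniform d k ψ)
    (hsupp : (univ.filter fun x => ψ x ≠ 0).card =
      ∏ i ∈ univ.filter (fun i : Fin N => (i : ℕ) < k), d i) :
    (∀ v u : ∀ i, Fin (d i), v ≠ u →
      ∑ x, (starRingEnd ℂ) (pauliAct d k v ψ x) * pauliAct d k u ψ x = 0) ∧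
    (∀ v : ∀ i, Fin (d i),
      (∑ x, ‖pauliAct d k v ψ x‖ ^ 2 = 1) ∧
      IsKUniform d k (pauliAct d k v ψ) ∧
      (univ.filter fun x => pauliAct d k v ψ x ≠ 0).card =
        ∏ i ∈ univ.filter (fun i : Fin N => (i : ℕ) < k), d i) ∧
    Submodule.span ℂ (Set.range fun v : ∀ i, Fin (d i) => pauliAct d k v ψ) = ⊤ := by
  have : ∀ i, NeZero (d i) := fun i => ⟨(hd i).ne'⟩
  have horth : ∀ v u : ∀ i, Fin (d i), v ≠ u →
      ∑ x, conj (pauliAct d k v ψ x) * pauliAct d k u ψ x = 0 :=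
    fun _ _ => sum_conj_pauliAct_mul_pauliAct_eq_zero hk hu hsupp
  have hnormU : ∀ v, ∑ x, ‖pauliAct d k v ψ x‖ ^ 2 = 1 := fun v => by
    rw [pauliAct_eq_monomialAct, sum_norm_sq_monomialAct (norm_pauliPhase d k v), hnorm]
  refine ⟨horth, fun v => ⟨hnormU v, ?_, ?_⟩,
    span_range_eq_top_of_orthonormal _ horth hnormU rfl⟩
  · rw [pauliAct_eq_monomialAct]
    exact hu.monomialAct (norm_pauliPhase d k v)
  · rw [pauliAct_eq_monomialAct, card_support_monomialAct (norm_pauliPhase d k v), hsupp]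

/-- Given a `k`-uniform state `ψ` with minimum support in
`C^{d₁} ⊗ ⋯ ⊗ C^{d_N}` (with `d₁ ≥ ⋯ ≥ d_N`), the `d₁⋯d_N` generalized-Pauli
translates `U(v)ψ` are pairwise orthogonal, each is a normalized `k`-uniform
state with minimum support, and together they span the whole space, hence form
an orthogonal basis. -/
theorem kUniform_min_support_basis {N k : ℕ} (d : Fin N → ℕ)
    (hd : ∀ i, 0 < d i) (hmono : ∀ i j : Fin N, i ≤ j → d j ≤ d i) (hk : k ≤ N)
    (ψ : (∀ i, Fin (d i)) → ℂ)
    (hnorm : ∑ x, ‖ψ x‖ ^ 2 = 1)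
    (hu : IsKUniform d k ψ)
    (hsupp : (univ.filter fun x => ψ x ≠ 0).card =
      ∏ i ∈ univ.filter (fun i : Fin N => (i : ℕ) < k), d i) :
    (∀ v u : ∀ i, Fin (d i), v ≠ u →
      ∑ x, (starRingEnd ℂ) (pauliAct d k v ψ x) * pauliAct d k u ψ x = 0) ∧
    (∀ v : ∀ i, Fin (d i),
      (∑ x, ‖pauliAct d k v ψ x‖ ^ 2 = 1) ∧
      IsKUniform d k (pauliAct d k v ψ) ∧
      (univ.filter fun x => pauliAct d k v ψ x ≠ 0).card =
        ∏ i ∈ univ.filter (fun i : Fin N => (i : ℕ) < k), d i) ∧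
    Submodule.span ℂ (Set.range fun v : ∀ i, Fin (d i) => pauliAct d k v ψ) = ⊤ :=
  kUniform_min_support_basis_general d hd hk ψ hnorm hu hsupp
end

section
/- If a k-uniform state exists in C^{d_1}⊗C^{d_2}⊗...⊗C^{d_N} with d_1 ≥ d_2 ≥ ... ≥ d_N, then d_1 d_2 ··· d_k ≤ d_{k+1} d_{k+2} ··· d_N; in particular k ≤ ⌊N/2⌋. -/
/-!
Reshape the state `ψ` into the matrix `M` whose rows are indexed by the configurations of the
first `k` parties `S` and whose columns by those of the rest. The reduced density matrix on `S`
is the Gram matrix `M Mᴴ`, so `k`-uniformity says `M Mᴴ = (∏_{i∈S} dᵢ)⁻¹ • 1`; hence `M` has full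
row rank and `∏_{i∈S} dᵢ ≤ ∏_{i∉S} dᵢ`. For `k > N/2`, monotonicity and `d_k ≥ 2` give
`d_k ^ k ≤ ∏_{i∈S} dᵢ ≤ ∏_{i∉S} dᵢ ≤ d_k ^ (N - k)`, which forces `k ≤ N - k`.
-/

open Finset

open scoped Matrix ComplexOrder

namespace Matrix

theorem card_le_card_of_mul_conjTranspose_eq_smul_one {m n R : Type*} [Fintype m] [Fintype n]
    [DecidableEq m] [Field R] [PartialOrder R] [StarRing R] [StarOrderedRing R]
    (M : Matrix m n R) {c : R} (hc : c ≠ 0) (h : M * Mᴴ = c • 1) :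
    Fintype.card m ≤ Fintype.card n :=
  calc Fintype.card m = (c • (1 : Matrix m m R)).rank := by
        rw [rank_smul_of_mem_nonZeroDivisors _ (mem_nonZeroDivisors_of_ne_zero hc), rank_one]
    _ = M.rank := by rw [← h, rank_self_mul_conjTranspose]
    _ ≤ Fintype.card n := M.rank_le_card_width

end Matrix

section Reshape

variable {ι : Type} [Fintype ι] [DecidableEq ι] {d : ι → ℕ}

def reshape (ψ : (∀ i, Fin (d i)) → ℂ) (S : Finset ι) :
    Matrix (∀ i : {i // i ∈ S}, Fin (d i)) (∀ i : {i // i ∉ S}, Fin (d i)) ℂ :=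
  fun a c => ψ fun i => if h : i ∈ S then a ⟨i, h⟩ else c ⟨i, h⟩

theorem reshape_mul_conjTranspose_apply (ψ : (∀ i, Fin (d i)) → ℂ) (S : Finset ι)
    (x y : ∀ i, Fin (d i)) :
    (reshape ψ S * (reshape ψ S)ᴴ) (Subtype.restrict (· ∈ S) x) (Subtype.restrict (· ∈ S) y) =
      reducedEntry d ψ S x y :=
  Finset.sum_congr rfl fun _ _ => rfl

theorem IsKUniform.reshape_mul_conjTranspose {k : ℕ} {ψ : (∀ i, Fin (d i)) → ℂ}
    (hψ : IsKUniform d k ψ) (hd : ∀ i, 0 < d i) {S : Finset ι} (hS : S.card = k) :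
    reshape ψ S * (reshape ψ S)ᴴ = (∏ i ∈ S, (d i : ℂ))⁻¹ • 1 := by
  have : ∀ i, Nonempty (Fin (d i)) := fun i => Fin.pos_iff_nonempty.mp (hd i)
  ext a b
  obtain ⟨x, rfl⟩ := Subtype.surjective_restrict (β := fun i => Fin (d i)) (· ∈ S) a
  obtain ⟨y, rfl⟩ := Subtype.surjective_restrict (β := fun i => Fin (d i)) (· ∈ S) b
  rw [reshape_mul_conjTranspose_apply, hψ S hS, Matrix.smul_apply, Matrix.one_apply]
  simp [funext_iff]

theorem IsKUniform.prod_le_prod_compl {k : ℕ} {ψ : (∀ i, Fin (d i)) → ℂ}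
    (hψ : IsKUniform d k ψ) (hd : ∀ i, 0 < d i) {S : Finset ι} (hS : S.card = k) :
    ∏ i ∈ S, d i ≤ ∏ i ∈ Sᶜ, d i := by
  have hD : (∏ i ∈ S, (d i : ℂ))⁻¹ ≠ 0 :=
    inv_ne_zero (prod_ne_zero_iff.2 fun i _ => by exact_mod_cast (hd i).ne')
  have := (reshape ψ S).card_le_card_of_mul_conjTranspose_eq_smul_one hD
    (hψ.reshape_mul_conjTranspose hd hS)
  simp only [Fintype.card_pi, Fintype.card_fin] at this
  rwa [prod_coe_sort, ← prod_subtype Sᶜ fun _ => mem_compl] at this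

end Reshape

theorem card_le_card_of_prod_le_prod {ι : Type*} {s t : Finset ι} {d : ι → ℕ} {c : ℕ}
    (hc : 1 < c) (hs : ∀ i ∈ s, c ≤ d i) (ht : ∀ i ∈ t, d i ≤ c)
    (h : ∏ i ∈ s, d i ≤ ∏ i ∈ t, d i) : s.card ≤ t.card :=
  (Nat.pow_le_pow_iff_right hc).mp <|
    (s.pow_card_le_prod d c hs).trans (h.trans (t.prod_le_pow_card d c ht))

/-- If a `k`-uniform state exists in `C^{d₁} ⊗ ⋯ ⊗ C^{d_N}` with
`d₁ ≥ d₂ ≥ ⋯ ≥ d_N` (all dimensions at least 2), then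
`d₁⋯d_k ≤ d_{k+1}⋯d_N`; in particular `k ≤ ⌊N/2⌋`. -/
theorem kUniform_dimension_bound {N k : ℕ} (d : Fin N → ℕ)
    (h2 : ∀ i, 2 ≤ d i) (hmono : ∀ i j : Fin N, i ≤ j → d j ≤ d i) (hk : k ≤ N)
    (h : ∃ ψ : (∀ i, Fin (d i)) → ℂ,
      (∑ x, ‖ψ x‖ ^ 2 = 1) ∧ IsKUniform d k ψ) :
    (∏ i ∈ univ.filter fun i : Fin N => (i : ℕ) < k, d i) ≤
      (∏ i ∈ univ.filter fun i : Fin N => ¬ (i : ℕ) < k, d i) ∧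
    k ≤ N / 2 := by
  obtain ⟨ψ, -, hψ⟩ := h
  have hcard : (univ.filter fun i : Fin N => (i : ℕ) < k).card = k := by
    rw [Fin.card_filter_val_lt]; omega
  have hcard_compl : (univ.filter fun i : Fin N => ¬ (i : ℕ) < k).card = N - k := by
    have := card_filter_add_card_filter_not (s := univ) fun i : Fin N => (i : ℕ) < k
    rw [hcard, card_univ, Fintype.card_fin] at this
    omega
  have hprod := hψ.prod_le_prod_compl (fun i => Nat.zero_lt_two.trans_le (h2 i)) hcard
  rw [compl_filter] at hprod
  refine ⟨hprod, ?_⟩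
  obtain rfl | hk0 := Nat.eq_zero_or_pos k
  · exact Nat.zero_le _
  have hcard_le := card_le_card_of_prod_le_prod (c := d ⟨k - 1, by omega⟩) (h2 _)
    (fun i hi => hmono _ _ (Fin.le_def.2 (Nat.le_sub_one_of_lt (mem_filter.1 hi).2)))
    (fun i hi => hmono _ _ (Fin.le_def.2 ((k.sub_le 1).trans (not_lt.1 (mem_filter.1 hi).2))))
    hprod
  omega
end

section
/- If a k-uniform state with minimum support exists in C^{d_1}⊗C^{d_2}⊗...⊗C^{d_N} with d_1 ≥ ... ≥ d_N, then for every subset {i_1,...,i_k} ⊂ {1,...,N}, the product d_{i_1} d_{i_2} ··· d_{i_k} divides d_1 d_2 ··· d_k. -/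
open Finset

/-!
The diagonal entries of the reduction of `ψ` to a set `S` of parties are the weights
`∑ ‖ψ x‖²` of the fibres of the restriction map `x ↦ x|_S`, so `k`-uniformity says that every
fibre over a `k`-set `S` has weight `1 / ∏_{i ∈ S} d i`; in particular it meets the support.
For the first `k` parties `T` there are exactly as many fibres as support points, so each fibre
over `T` holds a single support point, and every nonzero coefficient has `‖ψ x‖² = 1 / M` with
`M = ∏_{i ∈ T} d i`. A fibre over an arbitrary `k`-set `S` then has weight
`#(fibre ∩ support) / M = 1 / ∏_{i ∈ S} d i`, so `∏_{i ∈ S} d i` divides `M`.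
-/

open scoped Classical

section

variable {ι : Type} [Fintype ι] [DecidableEq ι] {d : ι → ℕ}

lemma sum_dite_mem_eq_sum_restrict_eq {M : Type} [AddCommMonoid M] (S : Finset ι)
    (a : ∀ i, Fin (d i)) (g : (∀ i, Fin (d i)) → M) :
    ∑ c : ∀ i : {i // i ∉ S}, Fin (d i.1), g (fun i => if h : i ∈ S then a i else c ⟨i, h⟩) =
      ∑ x with S.restrict x = S.restrict a, g x := by
  refine sum_nbij' (fun c i => if h : i ∈ S then a i else c ⟨i, h⟩) (fun x i => x i.1)
    ?_ (fun _ _ => mem_univ _) ?_ ?_ (fun _ _ => rfl)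
  · intro c _
    simp only [mem_filter, mem_univ, true_and]
    funext i
    simp
  · intro c _
    funext i
    simp [i.2]
  · intro x hx
    simp only [mem_filter, mem_univ, true_and] at hx
    funext i
    by_cases h : i ∈ S
    · simpa [h] using (congrFun hx ⟨i, h⟩).symm
    · simp [h]

lemma reducedEntry_self (ψ : (∀ i, Fin (d i)) → ℂ) (S : Finset ι) (a : ∀ i, Fin (d i)) :
    reducedEntry d ψ S a a = ((∑ x with S.restrict x = S.restrict a, ‖ψ x‖ ^ 2 : ℝ) : ℂ) := by
  rw [reducedEntry, sum_dite_mem_eq_sum_restrict_eq S a fun x => ψ x * starRingEnd ℂ (ψ x)]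
  push_cast
  exact sum_congr rfl fun x _ => Complex.mul_conj' (ψ x)

namespace IsKUniform

variable {k : ℕ} {ψ : (∀ i, Fin (d i)) → ℂ} {S : Finset ι}

lemma sum_normSq_restrict_eq (hu : IsKUniform d k ψ) (hS : S.card = k) (a : ∀ i, Fin (d i)) :
    ∑ x with S.restrict x = S.restrict a, ‖ψ x‖ ^ 2 = (∏ i ∈ S, (d i : ℝ))⁻¹ := by
  have h := hu S hS a a
  rw [reducedEntry_self, if_pos fun _ _ => rfl, one_div] at h
  refine Complex.ofReal_injective ?_
  push_cast at h ⊢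
  exact h

lemma sum_normSq_support_restrict_eq (hu : IsKUniform d k ψ) (hS : S.card = k)
    (a : ∀ i, Fin (d i)) :
    ∑ x with ψ x ≠ 0 ∧ S.restrict x = S.restrict a, ‖ψ x‖ ^ 2 = (∏ i ∈ S, (d i : ℝ))⁻¹ := by
  rw [← hu.sum_normSq_restrict_eq hS a, ← filter_filter, filter_comm (fun x => ψ x ≠ 0)]
  exact sum_filter_of_ne fun x _ hx h0 => hx (by simp [h0])

lemma exists_ne_zero_restrict_eq (hu : IsKUniform d k ψ) (hS : S.card = k)
    (a : ∀ i, Fin (d i)) : ∃ x, ψ x ≠ 0 ∧ S.restrict x = S.restrict a := by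
  by_contra! hnone
  have h := hu.sum_normSq_support_restrict_eq hS a
  rw [filter_false_of_mem fun x _ ⟨hx, hxa⟩ => hnone x hx hxa, sum_empty] at h
  have hpos : (0 : ℝ) < ∏ i ∈ S, (d i : ℝ) := prod_pos fun i _ => by exact_mod_cast (a i).pos
  exact (inv_pos.mpr hpos).ne h

lemma injOn_restrict_support_s17 (hd : ∀ i, 0 < d i) (hu : IsKUniform d k ψ) {T : Finset ι}
    (hT : T.card = k) (hsupp : #{x | ψ x ≠ 0} = ∏ i ∈ T, d i) :
    Set.InjOn T.restrict {x | ψ x ≠ 0} := by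
  rw [← coe_filter_univ]
  refine injOn_of_surjOn_of_card_le (t := univ) _ (fun _ _ => mem_coe.mpr (mem_univ _)) ?_ ?_
  · intro p _
    obtain ⟨x, hx, hxp⟩ := hu.exists_ne_zero_restrict_eq hT
      (fun i => if h : i ∈ T then p ⟨i, h⟩ else ⟨0, hd i⟩)
    exact ⟨x, by simpa using hx, by funext i; simpa [i.2] using congrFun hxp i⟩
  · simp [hsupp, Fintype.card_pi, prod_attach]

lemma normSq_eq_of_card_support (hd : ∀ i, 0 < d i) (hu : IsKUniform d k ψ) {T : Finset ι}
    (hT : T.card = k) (hsupp : #{x | ψ x ≠ 0} = ∏ i ∈ T, d i) {x : ∀ i, Fin (d i)}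
    (hx : ψ x ≠ 0) : ‖ψ x‖ ^ 2 = (∏ i ∈ T, (d i : ℝ))⁻¹ := by
  have hfiber : ({y | ψ y ≠ 0 ∧ T.restrict y = T.restrict x} : Finset _) = {x} := by
    ext y
    simp only [mem_filter, mem_univ, true_and, mem_singleton]
    refine ⟨fun ⟨hy, hyx⟩ => injOn_restrict_support_s17 hd hu hT hsupp hy hx hyx, ?_⟩
    rintro rfl
    exact ⟨hx, rfl⟩
  simpa [hfiber] using hu.sum_normSq_support_restrict_eq hT x

lemma prod_dvd_of_normSq_eq (hd : ∀ i, 0 < d i) (hu : IsKUniform d k ψ) (hS : S.card = k)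
    {M : ℕ} (hM : ∀ x, ψ x ≠ 0 → ‖ψ x‖ ^ 2 = (M : ℝ)⁻¹) : ∏ i ∈ S, d i ∣ M := by
  let a : ∀ i, Fin (d i) := fun i => ⟨0, hd i⟩
  set n := #{x | ψ x ≠ 0 ∧ S.restrict x = S.restrict a}
  have hQ : (∏ i ∈ S, (d i : ℝ)) ≠ 0 :=
    prod_ne_zero_iff.mpr fun i _ => Nat.cast_ne_zero.mpr (hd i).ne'
  have hn : (n : ℝ) * (M : ℝ)⁻¹ = (∏ i ∈ S, (d i : ℝ))⁻¹ := by
    rw [← hu.sum_normSq_support_restrict_eq hS a,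
      sum_congr rfl fun x hx => hM x (mem_filter.mp hx).2.1, sum_const, nsmul_eq_mul]
  have hM0 : (M : ℝ) ≠ 0 := by
    rintro h0
    rw [h0, inv_zero, mul_zero] at hn
    exact inv_ne_zero hQ hn.symm
  have hMn : (M : ℝ) = (∏ i ∈ S, (d i : ℝ)) * n := by
    field_simp at hn
    linarith
  exact ⟨n, by exact_mod_cast hMn⟩

end IsKUniform

end

theorem min_support_divisibility_general {N k : ℕ} (d : Fin N → ℕ)
    (hd : ∀ i, 0 < d i) (hk : k ≤ N)
    (ψ : (∀ i, Fin (d i)) → ℂ)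
    (hu : IsKUniform d k ψ)
    (hsupp : (univ.filter fun x => ψ x ≠ 0).card =
      ∏ i ∈ univ.filter (fun i : Fin N => (i : ℕ) < k), d i) :
    ∀ S : Finset (Fin N), S.card = k →
      (∏ i ∈ S, d i) ∣ ∏ i ∈ univ.filter (fun i : Fin N => (i : ℕ) < k), d i := by
  intro S hS
  have hT : (univ.filter fun i : Fin N => (i : ℕ) < k).card = k := by
    rw [Fin.card_filter_val_lt, min_eq_right hk]
  exact hu.prod_dvd_of_normSq_eq hd hS fun x hx => by
    exact_mod_cast hu.normSq_eq_of_card_support hd hT hsupp hx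

/-- If a `k`-uniform state with minimum support exists in
`C^{d₁} ⊗ ⋯ ⊗ C^{d_N}` with `d₁ ≥ ⋯ ≥ d_N`, then for every `k`-subset
`{i₁, …, i_k}` of the parties, `d_{i₁}⋯d_{i_k}` divides `d₁⋯d_k`. -/
theorem min_support_divisibility {N k : ℕ} (d : Fin N → ℕ)
    (hd : ∀ i, 0 < d i) (hmono : ∀ i j : Fin N, i ≤ j → d j ≤ d i) (hk : k ≤ N)
    (ψ : (∀ i, Fin (d i)) → ℂ)
    (hnorm : ∑ x, ‖ψ x‖ ^ 2 = 1)
    (hu : IsKUniform d k ψ)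
    (hsupp : (univ.filter fun x => ψ x ≠ 0).card =
      ∏ i ∈ univ.filter (fun i : Fin N => (i : ℕ) < k), d i) :
    ∀ S : Finset (Fin N), S.card = k →
      (∏ i ∈ S, d i) ∣ ∏ i ∈ univ.filter (fun i : Fin N => (i : ℕ) < k), d i :=
  min_support_divisibility_general d hd hk ψ hu hsupp
end
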